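/- arXiv:math/0605698 — 12 statements merged into one kernel-verified Lean document; each statement's English description precedes it below -/
import Mathlib

section
/- In any semigroup S, if a ∼ₚ b and b is a group element (belongs to some subgroup of S), then a² is a group element. -/
/-! Write `a = x * y`, `b = y * x`, and let `d` be the inverse of `b` in its group `H_e`.
Then `a * a = x * b * y`, and `σ s = x * s * d * y` satisfies
`σ s * σ t = x * s * (d * b) * t * d * y = σ (s * t)` whenever `e * t = t`.
So `σ` is multiplicative on `H_e`, and it sends `b * b` to `a * a`. -/

variable {S : Type*} [Semigroup S]

/-- Primary conjugacy: `a = x*y` and `b = y*x` for some `x, y`. -/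
def PConj (a b : S) : Prop := ∃ x y : S, a = x * y ∧ b = y * x

/-- Conjugacy: the transitive closure of primary conjugacy. -/
def SConj : S → S → Prop := Relation.TransGen PConj

/-- `pw a n` is `a ^ n` for `n ≥ 1` (with junk value `a` at `n = 0`). -/
def pw (a : S) : ℕ → S
  | 0 => a
  | 1 => a
  | n + 2 => pw a (n + 1) * a

/-- An element is a group element iff it lies in some subgroup of `S`:
there is an idempotent `e` acting as identity on `a`, and an inverse of `a`
relative to `e`. -/
def IsGroupElement (a : S) : Prop :=
  ∃ e b : S, e * e = e ∧ e * a = a ∧ a * e = a ∧ a * b = e ∧ b * a = e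

/-- An element is group-bound if some positive power is a group element. -/
def GroupBound (a : S) : Prop := ∃ n : ℕ, 1 ≤ n ∧ IsGroupElement (pw a n)

/-- Green's L-relation: same principal left ideal in `S¹`. -/
def LRel (a b : S) : Prop :=
  (∃ u : WithOne S, u * (a : WithOne S) = (b : WithOne S)) ∧
  (∃ u : WithOne S, u * (b : WithOne S) = (a : WithOne S))

/-- Green's R-relation: same principal right ideal in `S¹`. -/
def RRel (a b : S) : Prop :=
  (∃ u : WithOne S, (a : WithOne S) * u = (b : WithOne S)) ∧
  (∃ u : WithOne S, (b : WithOne S) * u = (a : WithOne S))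

/-- Green's H-relation. -/
def HRel (a b : S) : Prop := LRel a b ∧ RRel a b

/-- Green's D-relation. -/
def DRel (a b : S) : Prop := ∃ c : S, LRel a c ∧ RRel c b

/-- `g` lies in the group `H_e` of the idempotent `e`, with an inverse normalised by `e * g' = g'`. -/
def IsUnitAt (e g : S) : Prop :=
  e * e = e ∧ e * g = g ∧ g * e = g ∧ ∃ g' : S, g * g' = e ∧ g' * g = e ∧ e * g' = g'

theorem IsGroupElement.exists_isUnitAt {g : S} (hg : IsGroupElement g) : ∃ e, IsUnitAt e g := by
  obtain ⟨e, c, hee, heg, hge, hgc, hcg⟩ := hg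
  refine ⟨e, hee, heg, hge, e * c, ?_, ?_, ?_⟩
  · rw [← mul_assoc, hge, hgc]
  · rw [mul_assoc, hcg, hee]
  · rw [← mul_assoc, hee]

namespace IsUnitAt

variable {e g : S}

theorem isGroupElement (h : IsUnitAt e g) : IsGroupElement g := by
  obtain ⟨hee, heg, hge, g', hgg', hg'g, -⟩ := h
  exact ⟨e, g', hee, heg, hge, hgg', hg'g⟩

theorem mul_self (h : IsUnitAt e g) : IsUnitAt e (g * g) := by
  obtain ⟨hee, heg, hge, g', hgg', hg'g, heg'⟩ := h
  refine ⟨hee, by rw [← mul_assoc, heg], by rw [mul_assoc, hge], g' * g', ?_, ?_, ?_⟩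
  · calc g * g * (g' * g') = g * (g * g') * g' := by simp only [mul_assoc]
      _ = e := by rw [hgg', hge, hgg']
  · calc g' * g' * (g * g) = g' * (g' * g) * g := by simp only [mul_assoc]
      _ = e := by rw [hg'g, mul_assoc, heg, hg'g]
  · rw [← mul_assoc, heg']

theorem map {T : Type*} [Semigroup T] (h : IsUnitAt e g) (σ : S → T)
    (hσ : ∀ s t, e * t = t → σ (s * t) = σ s * σ t) : IsUnitAt (σ e) (σ g) := by
  obtain ⟨hee, heg, hge, g', hgg', hg'g, heg'⟩ := h
  refine ⟨?_, ?_, ?_, σ g', ?_, ?_, ?_⟩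
  · rw [← hσ _ _ hee, hee]
  · rw [← hσ _ _ heg, heg]
  · rw [← hσ _ _ hee, hge]
  · rw [← hσ _ _ heg', hgg']
  · rw [← hσ _ _ heg, hg'g]
  · rw [← hσ _ _ heg', heg']

end IsUnitAt

theorem sandwich_mul_sandwich {x y d e : S} (hdyx : d * (y * x) = e) {t : S} (ht : e * t = t)
    (s : S) : x * s * d * y * (x * t * d * y) = x * (s * t) * d * y := by
  calc x * s * d * y * (x * t * d * y) = x * s * (d * (y * x)) * t * d * y := by
        simp only [mul_assoc]
    _ = x * s * (e * t) * d * y := by rw [hdyx]; simp only [mul_assoc]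
    _ = x * (s * t) * d * y := by rw [ht]; simp only [mul_assoc]

theorem IsGroupElement.mul_mul_of_mul {x y : S} (h : IsGroupElement (y * x)) :
    IsGroupElement (x * (y * x) * y) := by
  obtain ⟨e, he⟩ := h.exists_isUnitAt
  obtain ⟨-, -, hbe, d, hbd, hdb, -⟩ := id he
  have himage := (he.mul_self.map (fun s ↦ x * s * d * y)
    fun s t ht ↦ (sandwich_mul_sandwich hdb ht s).symm).isGroupElement
  have himage_eq : x * (y * x * (y * x)) * d * y = x * (y * x) * y := by
    rw [mul_assoc x, mul_assoc (y * x) (y * x) d, hbd, hbe]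
  rwa [himage_eq] at himage

theorem square_group_element_of_pconj (a b : S) (h : PConj a b)
    (hb : IsGroupElement b) : IsGroupElement (pw a 2) := by
  obtain ⟨x, y, rfl, rfl⟩ := h
  have hsq : pw (x * y) 2 = x * (y * x) * y := by
    simp only [pw, mul_assoc]
  rw [hsq]
  exact hb.mul_mul_of_mul
end

section
/- In any semigroup S, if a ∼ b (a and b are conjugate, i.e., related by the transitive closure of primary conjugacy) and b is a group element, then some power of a is a group element; more precisely, if a and b are conjugate in at most k primary-conjugacy steps, then a^(2^k) is a group element. -/
variable {S : Type*} [Semigroup S]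

/-- `a` and `b` are conjugate in at most `k` primary-conjugacy steps. -/
def ConjSteps (k : ℕ) (a b : S) : Prop :=
  ∃ c : ℕ → S, c 0 = a ∧ c k = b ∧ ∀ i < k, PConj (c i) (c (i + 1))

private lemma act' {u v w : S} (h : u * v = w) : ∀ t : S, u * (v * t) = w * t := by
  intro t; rw [← mul_assoc, h]

private lemma pw_succ' (c : S) {n : ℕ} (h : 1 ≤ n) : pw c (n + 1) = pw c n * c := by
  match n, h with
  | (m + 1), _ => rfl

private lemma pw_add' (c : S) {m : ℕ} (hm : 1 ≤ m) :
    ∀ n, 1 ≤ n → pw c (m + n) = pw c m * pw c n := by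
  intro n
  induction n with
  | zero => intro h; exact absurd h (by norm_num)
  | succ n ih =>
    intro _
    rcases Nat.eq_zero_or_pos n with rfl | hn
    · rw [pw_succ' c hm]; rfl
    · rw [show m + (n + 1) = (m + n) + 1 from rfl, pw_succ' c (by omega), ih hn,
        pw_succ' c hn, mul_assoc]

private lemma sq_group' {x y : S} (hg : IsGroupElement (y * x)) :
    IsGroupElement ((x * y) * (x * y)) := by
  set b := y * x with hb
  obtain ⟨e, v, hee, heb, hbe, hbv, hvb⟩ := hg
  set bi := e * (v * e) with hbi
  have hbbi : b * bi = e := by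
    rw [hbi, act' hbe, act' hbv, hee]
  have hbib : bi * b = e := by
    rw [hbi, mul_assoc, mul_assoc, heb, hvb, hee]
  have hbie : bi * e = bi := by
    rw [hbi, mul_assoc, mul_assoc, hee]
  have hebi : e * bi = bi := by
    rw [hbi]; exact act' hee (v * e)
  have A1 : ∀ t, y * (x * t) = b * t := fun t => by rw [hb, mul_assoc]
  have A2 : ∀ t, bi * (b * t) = e * t := act' hbib
  have A3 : ∀ t, b * (bi * t) = e * t := act' hbbi
  have A4 : ∀ t, e * (b * t) = b * t := act' heb
  have A5 : ∀ t, b * (e * t) = b * t := act' hbe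
  have A6 : ∀ t, e * (bi * t) = bi * t := act' hebi
  have A7 : ∀ t, bi * (e * t) = bi * t := act' hbie
  have A8 : ∀ t, e * (e * t) = e * t := act' hee
  refine ⟨x * (bi * y), x * (bi * (bi * (bi * y))), ?_, ?_, ?_, ?_, ?_⟩ <;>
    simp only [mul_assoc, A1, A2, A3, A4, A5, A6, A7, A8]

private lemma pconj_pw' {a b : S} (h : PConj a b) :
    ∀ m, 1 ≤ m → PConj (pw a m) (pw b m) := by
  obtain ⟨x, y, ha, hb⟩ := h
  have key : ∀ n, 1 ≤ n → pw a (n + 1) = x * (pw b n * y) := by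
    intro n hn
    induction n with
    | zero => exact absurd hn (by norm_num)
    | succ n ih =>
      rcases Nat.eq_zero_or_pos n with rfl | hn'
      · show a * a = x * (b * y)
        rw [ha, hb]
        simp only [mul_assoc]
      · rw [pw_succ' a (by omega), ih hn', ha, pw_succ' b hn', hb]
        simp only [mul_assoc]
  intro m hm
  rcases Nat.eq_zero_or_pos (m - 1) with h0 | hn
  · have : m = 1 := by omega
    subst this
    exact ⟨x, y, ha, hb⟩
  · obtain ⟨n, rfl⟩ : ∃ n, m = n + 1 := ⟨m - 1, by omega⟩
    have hn1 : 1 ≤ n := by omega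
    refine ⟨x, pw b n * y, key n hn1, ?_⟩
    rw [mul_assoc, ← hb, ← pw_succ' b hn1]

private lemma step' {a b : S} (h : PConj a b) {m : ℕ} (hm : 1 ≤ m)
    (hg : IsGroupElement (pw b m)) : IsGroupElement (pw a (m + m)) := by
  obtain ⟨x, y, hx, hy⟩ := pconj_pw' h m hm
  rw [hy] at hg
  rw [pw_add' a hm m hm, hx]
  exact sq_group' hg

private lemma steps' {b : S} (hb : IsGroupElement b) :
    ∀ k, 1 ≤ k → ∀ a : S, ConjSteps k a b → IsGroupElement (pw a (2 ^ k)) := by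
  intro k
  induction k with
  | zero => intro h; exact absurd h (by norm_num)
  | succ k ih =>
    intro _ a hc
    obtain ⟨c, h0, hk, hstep⟩ := hc
    rcases Nat.eq_zero_or_pos k with rfl | hk1
    · have hp : PConj a b := by
        have := hstep 0 (by norm_num); rwa [h0, hk] at this
      have : IsGroupElement (pw a (1 + 1)) := step' hp le_rfl hb
      rwa [show 2 ^ 1 = 1 + 1 from rfl]
    · have hp : PConj a (c 1) := h0 ▸ hstep 0 (by omega)
      have hcs : ConjSteps k (c 1) b :=
        ⟨fun i => c (i + 1), rfl, hk, fun i hi => hstep (i + 1) (by omega)⟩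
      have hg := ih hk1 (c 1) hcs
      have := step' hp Nat.one_le_two_pow hg
      rwa [show 2 ^ k + 2 ^ k = 2 ^ (k + 1) by ring] at this

theorem power_group_element_of_sconj (a b : S) (hb : IsGroupElement b) :
    (SConj a b → ∃ n : ℕ, 1 ≤ n ∧ IsGroupElement (pw a n)) ∧
    (∀ k : ℕ, 1 ≤ k → ConjSteps k a b → IsGroupElement (pw a (2 ^ k))) := by
  constructor
  · intro h
    induction h using Relation.TransGen.head_induction_on with
    | single h => exact ⟨2, by norm_num, step' h le_rfl hb⟩
    | head h _ ih' =>
      obtain ⟨n, hn, hg⟩ := ih'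
      exact ⟨n + n, by omega, step' h hn hg⟩
  · intro k hk hc
    exact steps' hb k hk a hc
end

section
/- In any semigroup S, if a ∼ b and b is group-bound (some power of b lies in a subgroup), then a is group-bound. -/
variable {S : Type*} [Semigroup S]

/-- Coercion of `pw` to `WithOne S` is a genuine power, for `n ≥ 1`. -/
lemma coe_pw (a : S) : ∀ n : ℕ, 1 ≤ n → ((pw a n : S) : WithOne S) = (a : WithOne S) ^ n
  | 1, _ => by simp [pw]
  | (n+2), _ => by
    have h : pw a (n+2) = pw a (n+1) * a := rfl
    rw [h, WithOne.coe_mul, coe_pw a (n+1) (by omega), ← pow_succ]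

lemma coe_mul_exists (c : S) (z : WithOne S) :
    ∃ d : S, (c : WithOne S) * z = (d : WithOne S) := by
  induction z using WithOne.cases_on
  · exact ⟨c, by simp⟩
  · intro z; exact ⟨c * z, by simp⟩

lemma conj_mul_helper {M : Type*} [Monoid M] (X Y M₁ M₂ : M) :
    (X * M₁ * Y) * (X * M₂ * Y) = X * (M₁ * (Y*X) * M₂) * Y := by
  simp [mul_assoc]

lemma pow_conj {M : Type*} [Monoid M] (X Y : M) :
    ∀ k : ℕ, (X * Y) ^ (k+1) = X * (Y*X)^k * Y
  | 0 => by simp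
  | (k+1) => by
    have h1 : (X*Y)^(k+2) = (X*Y)^(k+1) * (X*Y) := pow_succ _ _
    rw [h1, pow_conj X Y k]
    have h2 : X * Y = X * 1 * Y := by rw [mul_one]
    rw [h2, conj_mul_helper, mul_one, ← pow_succ]

/-- In a monoid, build a "local inverse" `V` of `T` relative to the idempotent `E`. -/
lemma build_V {M : Type*} [Monoid M] (T E Z : M) (n : ℕ) (hn : 1 ≤ n)
    (hEE : E*E = E) (hETn : E * T^n = T^n) (hTnE : T^n * E = T^n)
    (hTnZ : T^n * Z = E) (hZTn : Z * T^n = E) (hZE : Z * E = Z) (hEZ : E * Z = Z) :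
    ∃ V : M, V * T = E ∧ T * V = E ∧ E * V = V ∧ V * E = V := by
  have hsub : n - 1 + 1 = n := Nat.sub_add_cancel hn
  have hpow1 : T^(n-1) * T = T^n := by rw [← pow_succ, hsub]
  have hpow2 : T * T^(n-1) = T^n := by rw [← pow_succ', hsub]
  have hETn1 : E * T^(n+1) = T^(n+1) := by rw [pow_succ, ← mul_assoc, hETn]
  have hTn1E : T^(n+1) * E = T^(n+1) := by rw [pow_succ', mul_assoc, hTnE]
  have hTE : T * E = T^(n+1) * Z := by rw [pow_succ', mul_assoc, hTnZ]
  have hET : E * T = Z * T^(n+1) := by rw [pow_succ, ← mul_assoc, hZTn]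
  have hETE1 : E * (T * E) = T * E := by rw [hTE, ← mul_assoc, hETn1]
  have hETE2 : (E * T) * E = E * T := by rw [hET, mul_assoc, hTn1E]
  have hcommET : E * T = T * E := by rw [← hETE2, mul_assoc, hETE1]
  have hcE : Commute E T := hcommET
  have hcommETk : E * T^(n-1) = T^(n-1) * E := (hcE.pow_right (n-1))
  have hVT : (Z*T^(n-1)) * T = E := by rw [mul_assoc, hpow1, hZTn]
  have hEV : E * (Z*T^(n-1)) = Z*T^(n-1) := by rw [← mul_assoc, hEZ]
  have hVE : (Z*T^(n-1)) * E = Z*T^(n-1) := by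
    rw [mul_assoc, ← hcommETk, ← mul_assoc, hZE]
  have hTR : T * (T^(n-1) * Z) = E := by rw [← mul_assoc, hpow2, hTnZ]
  have hER : E * (T^(n-1) * Z) = T^(n-1) * Z := by
    rw [← mul_assoc, hcommETk, mul_assoc, hEZ]
  have hVR : Z*T^(n-1) = T^(n-1)*Z := by
    calc Z*T^(n-1) = (Z*T^(n-1)) * (T * (T^(n-1) * Z)) := by rw [hTR, hVE]
    _ = ((Z*T^(n-1)) * T) * (T^(n-1) * Z) := by
        rw [mul_assoc (Z*T^(n-1)) T (T^(n-1)*Z)]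
    _ = T^(n-1)*Z := by rw [hVT, hER]
  have hTV : T * (Z*T^(n-1)) = E := by rw [hVR]; exact hTR
  exact ⟨Z*T^(n-1), hVT, hTV, hEV, hVE⟩

lemma core {M : Type*} [Monoid M] (X Y T V E : M) (m : ℕ)
    (hYX : Y * X = T)
    (hVT : V * T = E) (hTV : T * V = E) (hEV : E * V = V) (hVE : V * E = V)
    (hEE : E * E = E) (hETm : E * T^m = T^m) (hTmE : T^m * E = T^m) :
    (X*V*Y) * (X*V*Y) = X*V*Y
    ∧ (X*V*Y) * (X*T^m*Y) = X*T^m*Y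
    ∧ (X*T^m*Y) * (X*V*Y) = X*T^m*Y
    ∧ (X*T^m*Y) * (X*V^(m+2)*Y) = X*V*Y
    ∧ (X*V^(m+2)*Y) * (X*T^m*Y) = X*V*Y := by
  have hcomm : Commute T V := hTV.trans hVT.symm
  have hEpow : ∀ k : ℕ, E^(k+1) = E := by
    intro k; induction k with
    | zero => exact pow_one E
    | succ k ih => rw [pow_succ, ih, hEE]
  have hTVk : T^(m+1) * V^(m+1) = E := by
    rw [← Commute.mul_pow hcomm, hTV, hEpow]
  have hVTk : V^(m+1) * T^(m+1) = E := by
    rw [← Commute.mul_pow hcomm.symm, hVT, hEpow]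
  have hp : V^(m+2) = V^(m+1) * V := pow_succ V (m+1)
  have hp' : V^(m+2) = V * V^(m+1) := pow_succ' V (m+1)
  refine ⟨?_, ?_, ?_, ?_, ?_⟩
  · rw [conj_mul_helper, hYX, hVT, hEV]
  · rw [conj_mul_helper, hYX, hVT, hETm]
  · rw [conj_mul_helper, hYX, mul_assoc (T^m) T V, hTV, hTmE]
  · rw [conj_mul_helper, hYX, ← pow_succ T m, hp,
      ← mul_assoc (T^(m+1)) (V^(m+1)) V, hTVk, hEV]
  · rw [conj_mul_helper, hYX, hp', mul_assoc V (V^(m+1)) T,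
      mul_assoc V (V^(m+1)*T) (T^m), mul_assoc (V^(m+1)) T (T^m),
      ← pow_succ' T m, hVTk, hVE]

lemma groupBound_of_pconj {a b : S} (h : PConj a b) (hb : GroupBound b) : GroupBound a := by
  obtain ⟨x, y, hxy, hyx⟩ := h
  obtain ⟨n, hn, e, s0, hee, hea, hae, hab, hba⟩ := hb
  have hse : (e*s0*e) * e = e*s0*e := by rw [mul_assoc (e*s0) e e, hee]
  have hes : e * (e*s0*e) = e*s0*e := by
    simp only [← mul_assoc]; rw [hee]
  have hps : pw b n * (e*s0*e) = e := by
    simp only [← mul_assoc]; rw [hae, hab, hee]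
  have hsp : (e*s0*e) * pw b n = e := by
    rw [mul_assoc, hea, mul_assoc, hba, hee]
  -- coerce to WithOne S
  have hTn : ((pw b n : S) : WithOne S) = ((y : WithOne S) * (x : WithOne S))^n := by
    rw [coe_pw b n hn, hyx, WithOne.coe_mul]
  have cEE : (e : WithOne S) * e = e := by exact_mod_cast hee
  have cETn : (e : WithOne S) * ((y:WithOne S)*(x:WithOne S))^n = ((y:WithOne S)*(x:WithOne S))^n := by
    rw [← hTn]; exact_mod_cast hea
  have cTnE : ((y:WithOne S)*(x:WithOne S))^n * (e : WithOne S) = ((y:WithOne S)*(x:WithOne S))^n := by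
    rw [← hTn]; exact_mod_cast hae
  have cTnZ : ((y:WithOne S)*(x:WithOne S))^n * ((e*s0*e : S) : WithOne S) = (e : WithOne S) := by
    rw [← hTn]; exact_mod_cast hps
  have cZTn : ((e*s0*e : S) : WithOne S) * ((y:WithOne S)*(x:WithOne S))^n = (e : WithOne S) := by
    rw [← hTn]; exact_mod_cast hsp
  have cZE : ((e*s0*e : S) : WithOne S) * (e : WithOne S) = ((e*s0*e : S) : WithOne S) := by
    exact_mod_cast hse
  have cEZ : (e : WithOne S) * ((e*s0*e : S) : WithOne S) = ((e*s0*e : S) : WithOne S) := by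
    exact_mod_cast hes
  obtain ⟨V, hVT, hTV, hEV, hVE⟩ :=
    build_V ((y:WithOne S)*(x:WithOne S)) (e : WithOne S) ((e*s0*e : S) : WithOne S)
      n hn cEE cETn cTnE cTnZ cZTn cZE cEZ
  obtain ⟨h1, h2, h3, h4, h5⟩ :=
    core (x : WithOne S) (y : WithOne S) ((y:WithOne S)*(x:WithOne S)) V (e : WithOne S)
      n rfl hVT hTV hEV hVE cEE cETn cTnE
  have hC : ((pw a (n+1) : S) : WithOne S)
      = (x : WithOne S) * ((y:WithOne S)*(x:WithOne S))^n * (y : WithOne S) := by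
    rw [coe_pw a (n+1) (by omega), hxy, WithOne.coe_mul, pow_conj]
  obtain ⟨f, hf⟩ := coe_mul_exists x (V * (y : WithOne S))
  obtain ⟨g, hg⟩ := coe_mul_exists x (V^(n+2) * (y : WithOne S))
  have hfF : ((f : S) : WithOne S) = (x : WithOne S) * V * (y : WithOne S) := by
    rw [← hf, ← mul_assoc]
  have hgB : ((g : S) : WithOne S) = (x : WithOne S) * V^(n+2) * (y : WithOne S) := by
    rw [← hg, ← mul_assoc]
  refine ⟨n+1, by omega, f, g, ?_, ?_, ?_, ?_, ?_⟩
  · have h : ((f*f : S) : WithOne S) = ((f : S) : WithOne S) := by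
      rw [WithOne.coe_mul, hfF, h1]
    exact_mod_cast h
  · have h : ((f * pw a (n+1) : S) : WithOne S) = ((pw a (n+1) : S) : WithOne S) := by
      rw [WithOne.coe_mul, hfF, hC, h2]
    exact_mod_cast h
  · have h : ((pw a (n+1) * f : S) : WithOne S) = ((pw a (n+1) : S) : WithOne S) := by
      rw [WithOne.coe_mul, hfF, hC, h3]
    exact_mod_cast h
  · have h : ((pw a (n+1) * g : S) : WithOne S) = ((f : S) : WithOne S) := by
      rw [WithOne.coe_mul, hgB, hC, h4, hfF]
    exact_mod_cast h
  · have h : ((g * pw a (n+1) : S) : WithOne S) = ((f : S) : WithOne S) := by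
      rw [WithOne.coe_mul, hgB, hC, h5, hfF]
    exact_mod_cast h


theorem groupBound_of_sconj (a b : S) (h : SConj a b) (hb : GroupBound b) :
    GroupBound a := by
  induction h using Relation.TransGen.head_induction_on with
  | single h => exact groupBound_of_pconj h hb
  | head h _ ih => exact groupBound_of_pconj h ih
end

section
/- Let S be a semigroup and a, b ∈ S group elements with a ∼ₚ b. Then there exist x, y ∈ S such that a = xy, b = yx, with x ∈ R_a ∩ L_b and y ∈ R_b ∩ L_a. -/
variable {S : Type*} [Semigroup S]

/-! Let `e`, `f` be the identities of the groups containing `a = s t` and `b = t s`. Since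
`a (s f t) = s b f t = a²` and `s f t = a (s b⁻¹ t)` lies in `a S`, cancelling `a` in its group
gives `s f t = a`; likewise `t e s = b`. Hence `x = e s f` and `y = f t e` satisfy `x y = a`,
`y x = b`, and with the inverses of `a` and `b` they realize the required Green relations. -/

theorem rRel_of_mul_eq {a b : S} (u v : S) (hb : a * u = b) (ha : b * v = a) : RRel a b :=
  ⟨⟨u, by rw [← WithOne.coe_mul, hb]⟩, ⟨v, by rw [← WithOne.coe_mul, ha]⟩⟩

theorem lRel_of_mul_eq {a b : S} (u v : S) (hb : u * a = b) (ha : v * b = a) : LRel a b :=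
  ⟨⟨u, by rw [← WithOne.coe_mul, hb]⟩, ⟨v, by rw [← WithOne.coe_mul, ha]⟩⟩

theorem rRel_and_lRel_of_eq_mul {a a' e x y : S} (hxy : a = x * y)
    (hr : a * a' = e) (hl : a' * a = e) (hx : e * x = x) (hy : y * e = y) :
    RRel x a ∧ LRel y a := by
  refine ⟨rRel_of_mul_eq y (a' * x) hxy.symm ?_, lRel_of_mul_eq x (y * a') hxy.symm ?_⟩
  · rw [← mul_assoc, hr, hx]
  · rw [mul_assoc, hl, hy]

theorem eq_of_mul_eq_mul_left_of_inv {a a' e x y : S} (hinv : a' * a = e)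
    (hx : e * x = x) (hy : e * y = y) (h : a * x = a * y) : x = y := by
  rw [← hx, ← hy, ← hinv, mul_assoc, mul_assoc, h]

theorem mul_idempotent_mul_eq_mul {s t e a' f b' : S}
    (hea : e * (s * t) = s * t) (hinv : a' * (s * t) = e)
    (hbf : t * s * f = t * s) (hbb : t * s * b' = f) :
    s * (f * t) = s * t := by
  refine eq_of_mul_eq_mul_left_of_inv hinv ?_ hea ?_
  · have hmem : s * (f * t) = s * t * (s * (b' * t)) := by
      rw [← hbb]; simp only [mul_assoc]
    rw [hmem, ← mul_assoc, hea]
  · calc s * t * (s * (f * t)) = s * (t * s * f * t) := by simp only [mul_assoc]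
      _ = s * t * (s * t) := by rw [hbf]; simp only [mul_assoc]

theorem mul_eq_mul_of_mul_idempotent_mul {s t e f : S} (hff : f * f = f)
    (hea : e * (s * t) = s * t) (hae : s * t * e = s * t) (hsft : s * (f * t) = s * t) :
    s * t = e * (s * f) * (f * (t * e)) := by
  calc s * t = e * (s * (f * f * t) * e) := by rw [hff, hsft, hae, hea]
    _ = e * (s * f) * (f * (t * e)) := by simp only [mul_assoc]

theorem pconj_group_elements_factorization (a b : S)
    (ha : IsGroupElement a) (hb : IsGroupElement b) (h : PConj a b) :
    ∃ x y : S, a = x * y ∧ b = y * x ∧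
      RRel x a ∧ LRel x b ∧ RRel y b ∧ LRel y a := by
  obtain ⟨s, t, rfl, rfl⟩ := h
  obtain ⟨e, a', hee, hea, hae, har, hal⟩ := ha
  obtain ⟨f, b', hff, hfb, hbf, hbr, hbl⟩ := hb
  have hsft := mul_idempotent_mul_eq_mul hea hal hbf hbr
  have htes := mul_idempotent_mul_eq_mul hfb hbl hae har
  have hx := mul_eq_mul_of_mul_idempotent_mul hff hea hae hsft
  have hy := mul_eq_mul_of_mul_idempotent_mul hee hfb hbf htes
  obtain ⟨hxa, hya⟩ := rRel_and_lRel_of_eq_mul hx har hal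
    (by simp only [← mul_assoc, hee]) (by simp only [mul_assoc, hee])
  obtain ⟨hyb, hxb⟩ := rRel_and_lRel_of_eq_mul hy hbr hbl
    (by simp only [← mul_assoc, hff]) (by simp only [mul_assoc, hff])
  exact ⟨_, _, hx, hy, hxa, hxb, hyb, hya⟩
end

section
/- Let S be a semigroup and a, b ∈ S group-bound elements with a ∼ₚ b. Then a·e_a ∼ₚ b·e_b. -/
variable {S : Type*} [Semigroup S]

/-!
Work in the monoid `S¹ = WithOne S`. Let `a = x * y`, `b = y * x`, and let `h` be the inverse of
`a * e_a` in the maximal subgroup `H` of `e_a` (it contains `a * e_a` because `a` commutes with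
`e_a`). Since `x * y * h = e_a`, the map `z ↦ y * h * z * x` is multiplicative on `S¹ e_a`, so it
carries `H` onto a group containing `b ^ (n + 1)` with identity `y * h * e_a * x`. An `H`-class
holds at most one idempotent and two positive powers of `b` have a common power, so this identity
is `e_b`. Hence `b * e_b = y * (x * y * h) * e_a * x = (y * e_a) * x`, while
`a * e_a = x * (y * e_a)`.
-/

section Monoid

variable {M : Type*} [Monoid M]

/-- `c` lies in the maximal subgroup of `M` with identity `e`, i.e. `c` is `H`-related to the
idempotent `e`. -/
def MemMaxSubgroup (e c : M) : Prop :=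
  e * c = c ∧ c * e = c ∧ (∃ u, u * c = e) ∧ ∃ v, c * v = e

namespace MemMaxSubgroup

variable {e f c d : M}

theorem idem (h : MemMaxSubgroup e c) : e * e = e := by
  obtain ⟨hec, -, -, v, hv⟩ := h
  calc e * e = e * c * v := by rw [mul_assoc, hv]
    _ = e := by rw [hec, hv]

theorem exists_inv (h : MemMaxSubgroup e c) :
    ∃ g, g * c = e ∧ c * g = e ∧ g * e = g ∧ e * g = g := by
  have he := h.idem
  obtain ⟨hec, hce, ⟨u, hu⟩, v, hv⟩ := h
  have hue : u * e = e * v := by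
    calc u * e = u * c * v := by rw [mul_assoc, hv]
      _ = e * v := by rw [hu]
  refine ⟨u * e, ?_, ?_, ?_, ?_⟩
  · rw [mul_assoc, hec, hu]
  · rw [hue, ← mul_assoc, hce, hv]
  · rw [mul_assoc, he]
  · rw [hue, ← mul_assoc, he]

theorem mul (hc : MemMaxSubgroup e c) (hd : MemMaxSubgroup e d) : MemMaxSubgroup e (c * d) := by
  obtain ⟨hec, hce, ⟨uc, huc⟩, vc, hvc⟩ := hc
  obtain ⟨hed, hde, ⟨ud, hud⟩, vd, hvd⟩ := hd
  refine ⟨by rw [← mul_assoc, hec], by rw [mul_assoc, hde], ⟨ud * uc, ?_⟩, vd * vc, ?_⟩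
  · calc ud * uc * (c * d) = ud * (uc * c * d) := by simp only [mul_assoc]
      _ = e := by rw [huc, hed, hud]
  · calc c * d * (vd * vc) = c * (d * vd) * vc := by simp only [mul_assoc]
      _ = e := by rw [hvd, hce, hvc]

theorem pow (h : MemMaxSubgroup e c) {k : ℕ} (hk : k ≠ 0) : MemMaxSubgroup e (c ^ k) := by
  induction k with
  | zero => exact absurd rfl hk
  | succ k ih =>
    rcases eq_or_ne k 0 with rfl | hk'
    · rwa [pow_one]
    · rw [pow_succ]
      exact (ih hk').mul h

theorem unique (he : MemMaxSubgroup e c) (hf : MemMaxSubgroup f c) : e = f := by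
  obtain ⟨hec, -, ⟨u, hu⟩, -⟩ := he
  obtain ⟨-, hcf, -, v, hv⟩ := hf
  calc e = u * c * f := by rw [mul_assoc, hcf, hu]
    _ = f := by rw [hu, ← hv, ← mul_assoc, hec]

theorem unique_of_pow {m n : ℕ} (he : MemMaxSubgroup e (c ^ m)) (hf : MemMaxSubgroup f (c ^ n))
    (hm : m ≠ 0) (hn : n ≠ 0) : e = f :=
  (he.pow hn).unique (by rw [← pow_mul, mul_comm, pow_mul]; exact hf.pow hm)

theorem commute_of_pow {a : M} {n : ℕ} (h : MemMaxSubgroup e (a ^ n)) : Commute a e := by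
  obtain ⟨hea, hae, ⟨u, hu⟩, v, hv⟩ := h
  have hsucc_e : a ^ (n + 1) * e = a ^ (n + 1) := by rw [pow_succ', mul_assoc, hae]
  have he_succ : e * a ^ (n + 1) = a ^ (n + 1) := by rw [pow_succ, ← mul_assoc, hea]
  calc a * e = a ^ (n + 1) * v := by rw [← hv, ← mul_assoc, ← pow_succ']
    _ = u * (a ^ n * a ^ (n + 1)) * v := by rw [← mul_assoc, hu, he_succ]
    _ = u * (a ^ (n + 1) * (a ^ n * v)) := by
      rw [(Commute.pow_pow_self a n (n + 1)).eq]; simp only [mul_assoc]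
    _ = e * a := by rw [hv, hsucc_e, pow_succ, ← mul_assoc, hu]

theorem mul_idem_of_pow {a : M} {n : ℕ} (h : MemMaxSubgroup e (a ^ n)) (hn : n ≠ 0) :
    MemMaxSubgroup e (a * e) := by
  have hcomm := h.commute_of_pow
  have he := h.idem
  obtain ⟨n, rfl⟩ := Nat.exists_eq_succ_of_ne_zero hn
  obtain ⟨-, -, ⟨u, hu⟩, v, hv⟩ := h
  refine ⟨by rw [← mul_assoc, ← hcomm.eq, mul_assoc, he], by rw [mul_assoc, he],
    ⟨u * a ^ n, ?_⟩, a ^ n * v, ?_⟩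
  · calc u * a ^ n * (a * e) = u * a ^ (n + 1) * e := by
          rw [pow_succ]; simp only [mul_assoc]
      _ = e := by rw [hu, he]
  · calc a * e * (a ^ n * v) = e * (a ^ (n + 1) * v) := by
          rw [hcomm.eq, pow_succ']; simp only [mul_assoc]
      _ = e := by rw [hv, he]

theorem map {N : Type*} [Monoid N] (h : MemMaxSubgroup e c) (ψ : M → N)
    (hψ : ∀ p q, p * e = p → ψ (p * q) = ψ p * ψ q) : MemMaxSubgroup (ψ e) (ψ c) := by
  obtain ⟨g, hgc, hcg, hge, -⟩ := h.exists_inv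
  refine ⟨by rw [← hψ _ _ h.idem, h.1], by rw [← hψ _ _ h.2.1, h.2.1],
    ⟨ψ g, ?_⟩, ψ g, ?_⟩
  · rw [← hψ _ _ hge, hgc]
  · rw [← hψ _ _ h.2.1, hcg]

theorem exists_conj {x y : M} {n : ℕ} (he : MemMaxSubgroup e ((x * y) ^ n)) (hn : n ≠ 0) :
    ∃ f, MemMaxSubgroup f ((y * x) ^ (n + 1)) ∧ y * x * f = y * e * x := by
  have hc := he.mul_idem_of_pow hn
  obtain ⟨h, hhc, hch, -, heh⟩ := hc.exists_inv
  have hxyh : x * y * h = e := by rw [← heh, ← mul_assoc, hch]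
  have hψ : ∀ p q, p * e = p → y * h * (p * q) * x = y * h * p * x * (y * h * q * x) := by
    intro p q hp
    calc y * h * (p * q) * x = y * h * (p * (x * y * h) * q) * x := by rw [hxyh, hp]
      _ = y * h * p * x * (y * h * q * x) := by simp only [mul_assoc]
  have hψc : y * h * (x * y * e * (x * y) ^ n) * x = (y * x) ^ (n + 1) := by
    calc y * h * (x * y * e * (x * y) ^ n) * x = y * (h * (x * y * e)) * (x * y) ^ n * x := by
          simp only [mul_assoc]
      _ = y * (x * y) ^ n * x := by rw [hhc, mul_assoc y e, he.1]
      _ = (y * x) ^ (n + 1) := by rw [← mul_pow_mul, pow_succ, mul_assoc _ y x]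
  refine ⟨y * h * e * x, hψc ▸ (hc.mul he).map (fun z ↦ y * h * z * x) hψ, ?_⟩
  calc y * x * (y * h * e * x) = y * (x * y * h) * e * x := by simp only [mul_assoc]
    _ = y * e * x := by rw [hxyh, mul_assoc y e e, he.idem]

end MemMaxSubgroup

end Monoid

theorem memMaxSubgroup_of_hRel {c e : S} (he : e * e = e) (h : HRel c e) :
    MemMaxSubgroup (e : WithOne S) c := by
  obtain ⟨⟨⟨u, hu⟩, u', hu'⟩, ⟨v, hv⟩, v', hv'⟩ := h
  have he' : (e : WithOne S) * e = e := by rw [← WithOne.coe_mul, he]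
  refine ⟨?_, ?_, ⟨u, hu⟩, v, hv⟩
  · rw [← hv', ← mul_assoc, he']
  · rw [← hu', mul_assoc, he']

theorem coe_pw_succ (a : S) : ∀ n, ((pw a (n + 1) : S) : WithOne S) = (a : WithOne S) ^ (n + 1)
  | 0 => by rw [pw, pow_one]
  | n + 1 => by rw [pw, WithOne.coe_mul, coe_pw_succ a n, pow_succ _ (n + 1)]

theorem pconj_mul_idempotents (a b ea eb : S) (ta tb : ℕ)
    (hta : 1 ≤ ta) (htb : 1 ≤ tb)
    (hea : ea * ea = ea) (hHa : HRel (pw a ta) ea)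
    (heb : eb * eb = eb) (hHb : HRel (pw b tb) eb)
    (h : PConj a b) : PConj (a * ea) (b * eb) := by
  obtain ⟨x, y, rfl, rfl⟩ := h
  obtain ⟨m, rfl⟩ := Nat.exists_eq_add_of_le' hta
  obtain ⟨k, rfl⟩ := Nat.exists_eq_add_of_le' htb
  have hA := memMaxSubgroup_of_hRel hea hHa
  have hB := memMaxSubgroup_of_hRel heb hHb
  rw [coe_pw_succ, WithOne.coe_mul] at hA hB
  obtain ⟨f, hf, hyxf⟩ := hA.exists_conj m.succ_ne_zero
  have hfeb : f = eb := hf.unique_of_pow hB (m + 1).succ_ne_zero k.succ_ne_zero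
  refine ⟨x, y * ea, mul_assoc x y ea, WithOne.coe_injective ?_⟩
  simpa only [WithOne.coe_mul, hfeb] using hyxf
end

section
/- Let S be a semigroup and a, b group elements with a H b and a ∼ₚ b. Then there exists h in the group H-class H_a such that a = h⁻¹ b h, where h⁻¹ is the inverse of h in H_a. -/
variable {S : Type*} [Semigroup S]

/-!
If `a = x * y` and `b = y * x`, then `y` intertwines the two elements: `y * a = y * x * y = b * y`.
With `e` the common identity of `H_a = H_b` and `a'`, `b'` the inverses there, `h := y * a` has the
left inverse `a' * a' * x` and the right inverse `x * b' * b'`, so `h` is a unit of the monoid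
`e S e`, i.e. `h ∈ H_e`. Finally `b * h = y * a * a = h * a`, hence `h⁻¹ * b * h = a`.
-/

theorem WithOne.exists_coe_mul_eq_coe {α : Type*} [Mul α] (s : α) (u : WithOne α) :
    ∃ t : α, (s : WithOne α) * u = t := by
  cases u with
  | one => exact ⟨s, mul_one _⟩
  | coe u => exact ⟨s * u, rfl⟩

theorem WithOne.exists_mul_coe_eq_coe {α : Type*} [Mul α] (u : WithOne α) (s : α) :
    ∃ t : α, u * (s : WithOne α) = t := by
  cases u with
  | one => exact ⟨s, one_mul _⟩
  | coe u => exact ⟨u * s, rfl⟩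

section Green

variable {a b c e : S}

theorem LRel.symm (h : LRel a b) : LRel b a := ⟨h.2, h.1⟩

theorem RRel.symm (h : RRel a b) : RRel b a := ⟨h.2, h.1⟩

theorem HRel.symm (h : HRel a b) : HRel b a := ⟨h.1.symm, h.2.symm⟩

theorem LRel.trans (hab : LRel a b) (hbc : LRel b c) : LRel a c := by
  obtain ⟨⟨u, hu⟩, ⟨u', hu'⟩⟩ := hab
  obtain ⟨⟨v, hv⟩, ⟨v', hv'⟩⟩ := hbc
  exact ⟨⟨v * u, by rw [mul_assoc, hu, hv]⟩,
    ⟨u' * v', by rw [mul_assoc, hv', hu']⟩⟩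

theorem RRel.trans (hab : RRel a b) (hbc : RRel b c) : RRel a c := by
  obtain ⟨⟨u, hu⟩, ⟨u', hu'⟩⟩ := hab
  obtain ⟨⟨v, hv⟩, ⟨v', hv'⟩⟩ := hbc
  exact ⟨⟨u * v, by rw [← mul_assoc, hu, hv]⟩,
    ⟨v' * u', by rw [← mul_assoc, hv', hu']⟩⟩

theorem HRel.trans (hab : HRel a b) (hbc : HRel b c) : HRel a c :=
  ⟨hab.1.trans hbc.1, hab.2.trans hbc.2⟩

theorem LRel.mul_right_eq_self (h : LRel a b) (hae : a * e = a) : b * e = b := by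
  obtain ⟨⟨u, hu⟩, -⟩ := h
  rw [← WithOne.coe_inj, WithOne.coe_mul, ← hu, mul_assoc, ← WithOne.coe_mul, hae]

theorem RRel.mul_left_eq_self (h : RRel a b) (hea : e * a = a) : e * b = b := by
  obtain ⟨⟨u, hu⟩, -⟩ := h
  rw [← WithOne.coe_inj, WithOne.coe_mul, ← hu, ← mul_assoc, ← WithOne.coe_mul, hea]

theorem LRel.exists_mul_eq {l : S} (h : LRel a b) (hl : l * a = e) : ∃ l' : S, l' * b = e := by
  obtain ⟨-, ⟨u, hu⟩⟩ := h
  obtain ⟨l', hl'⟩ := WithOne.exists_coe_mul_eq_coe l u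
  refine ⟨l', ?_⟩
  rw [← WithOne.coe_inj, WithOne.coe_mul, ← hl', mul_assoc, hu, ← WithOne.coe_mul, hl]

theorem RRel.exists_mul_eq {r : S} (h : RRel a b) (hr : a * r = e) : ∃ r' : S, b * r' = e := by
  obtain ⟨-, ⟨u, hu⟩⟩ := h
  obtain ⟨r', hr'⟩ := WithOne.exists_mul_coe_eq_coe u r
  refine ⟨r', ?_⟩
  rw [← WithOne.coe_inj, WithOne.coe_mul, ← hr', ← mul_assoc, hu, ← WithOne.coe_mul, hr]

end Green

/-- `u` and `v` are mutually inverse elements of the subgroup `H_e`. -/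
structure GroupInverse (e u v : S) : Prop where
  id_mul : e * u = u
  mul_id : u * e = u
  id_mul_inv : e * v = v
  inv_mul_id : v * e = v
  mul_inv : u * v = e
  inv_mul : v * u = e

namespace GroupInverse

variable {e u v : S}

theorem symm (h : GroupInverse e u v) : GroupInverse e v u :=
  ⟨h.id_mul_inv, h.inv_mul_id, h.id_mul, h.mul_id, h.inv_mul, h.mul_inv⟩

theorem idem (h : GroupInverse e u v) : e * e = e := by
  nth_rewrite 1 [← h.mul_inv]
  rw [mul_assoc, h.inv_mul_id, h.mul_inv]

theorem hRel (h : GroupInverse e u v) : HRel u e := by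
  refine ⟨⟨⟨v, ?_⟩, ⟨u, ?_⟩⟩, ⟨⟨v, ?_⟩, ⟨u, ?_⟩⟩⟩ <;> norm_cast
  exacts [h.inv_mul, h.mul_id, h.mul_inv, h.id_mul]

theorem of_left_right {l r : S} (he : e * e = e) (heu : e * u = u) (hue : u * e = u)
    (hl : l * u = e) (hr : u * r = e) : GroupInverse e u (e * r) := by
  have hlr : e * r = l * e := by rw [← hr, ← mul_assoc, hl, hr]
  refine ⟨heu, hue, by rw [← mul_assoc, he], by rw [hlr, mul_assoc, he], ?_, ?_⟩
  · rw [← mul_assoc, hue, hr]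
  · rw [hlr, mul_assoc, heu, hl]

end GroupInverse

theorem IsGroupElement.exists_groupInverse {a : S} (ha : IsGroupElement a) :
    ∃ e a', GroupInverse e a a' := by
  obtain ⟨e, c, he, hea, hae, hac, hca⟩ := ha
  exact ⟨e, _, .of_left_right he hea hae hca hac⟩

theorem HRel.exists_groupInverse {a b e a' : S} (h : HRel a b) (ha : GroupInverse e a a') :
    ∃ b', GroupInverse e b b' := by
  obtain ⟨l, hl⟩ := h.1.exists_mul_eq ha.inv_mul
  obtain ⟨r, hr⟩ := h.2.exists_mul_eq ha.mul_inv
  exact ⟨_, .of_left_right ha.idem (h.2.mul_left_eq_self ha.id_mul)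
    (h.1.mul_right_eq_self ha.mul_id) hl hr⟩

theorem PConj.exists_groupInverse_conj {a b e a' b' : S} (hab : PConj a b)
    (ha : GroupInverse e a a') (hb : GroupInverse e b b') :
    ∃ h h', GroupInverse e h h' ∧ a = h' * b * h := by
  obtain ⟨x, y, hx, hy⟩ := hab
  have hya : y * a = b * y := by rw [hx, hy, mul_assoc]
  have hl : a' * a' * x * (y * a) = e := by
    rw [mul_assoc _ x, ← mul_assoc x, ← hx, mul_assoc, ← mul_assoc a' a, ha.inv_mul,
      ha.id_mul, ha.inv_mul]
  have hr : y * a * (x * b' * b') = e := by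
    rw [hya, mul_assoc b, ← mul_assoc y, ← mul_assoc y, ← hy, ← mul_assoc, ← mul_assoc,
      mul_assoc b b b', hb.mul_inv, hb.mul_id, hb.mul_inv]
  have heh : e * (y * a) = y * a := by rw [hya, ← mul_assoc, hb.id_mul]
  have hhe : y * a * e = y * a := by rw [mul_assoc, ha.mul_id]
  have hg := GroupInverse.of_left_right ha.idem heh hhe hl hr
  refine ⟨_, _, hg, ?_⟩
  rw [mul_assoc, ← mul_assoc b, ← hya, ← mul_assoc, hg.inv_mul, ha.id_mul]

theorem pconj_in_group_HClass (a b : S)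
    (ha : IsGroupElement a) (hH : HRel a b) (h : PConj a b) :
    ∃ e h h' : S, e * e = e ∧ HRel e a ∧ HRel h a ∧ HRel h' a ∧
      h * h' = e ∧ h' * h = e ∧ a = h' * b * h := by
  obtain ⟨e, a', ha'⟩ := ha.exists_groupInverse
  obtain ⟨b', hb'⟩ := hH.exists_groupInverse ha'
  obtain ⟨g, g', hg, hconj⟩ := h.exists_groupInverse_conj ha' hb'
  have hea : HRel e a := ha'.hRel.symm
  exact ⟨e, g, g', ha'.idem, hea, hg.hRel.trans hea, hg.symm.hRel.trans hea, hg.mul_inv,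
    hg.inv_mul, hconj⟩
end

section
/- Let S be a semigroup and a, b ∈ S group elements. Then a ∼ₚ b if and only if there exist mutually inverse elements u, v ∈ S (u = uvu, v = vuv) such that b = u a v and a = v b u. -/
variable {S : Type*} [Semigroup S]

/-! Write `a = x * y`, `b = y * x`, and let `e`, `f` be the identities of the subgroups containing
`a` and `b`. The factors `e * x * f` and `f * y` still multiply to `a` and `b`, and `f` absorbs
them; for such factors `u = y` and `v = x * b⁻¹` (with `b⁻¹` the inverse of `b` relative to `f`)
are mutually inverse and conjugate `a` to `b`. Conversely `a = (v * b) * u` and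
`b = u * (v * b)`. -/

theorem idem_mul_mul_idem_mul_eq_of_factors {a b x y e f a' : S} (hxy : a = x * y)
    (hyx : b = y * x) (hea : e * a = a) (ha'a : a' * a = e) (hbf : b * f = b) :
    e * x * (f * y) = a := by
  subst hxy hyx
  calc e * x * (f * y) = a' * (x * y) * (x * (f * y)) := by rw [ha'a]; simp only [mul_assoc]
    _ = a' * (x * (y * x * f) * y) := by simp only [mul_assoc]
    _ = a' * (x * y) * (x * y) := by rw [hbf]; simp only [mul_assoc]
    _ = x * y := by rw [ha'a, hea]

theorem PConj.exists_factors_absorbing {a b e f a' b' : S} (h : PConj a b)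
    (hea : e * a = a) (ha'a : a' * a = e) (hae : a * e = a)
    (hff : f * f = f) (hfb : f * b = b) (hb'b : b' * b = f) (hbf : b * f = b) :
    ∃ x y : S, a = x * y ∧ b = y * x ∧ x * f = x ∧ f * y = y := by
  obtain ⟨x, y, hxy, hyx⟩ := h
  have hexfy := idem_mul_mul_idem_mul_eq_of_factors hxy hyx hea ha'a hbf
  have hfyex := idem_mul_mul_idem_mul_eq_of_factors hyx hxy hfb hb'b hae
  refine ⟨e * x * f, f * y, ?_, ?_, by rw [mul_assoc, hff], by rw [← mul_assoc, hff]⟩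
  · rw [mul_assoc (e * x), ← mul_assoc f, hff, hexfy]
  · calc b = f * y * (e * x) * f := by rw [hfyex, hbf]
      _ = f * y * (e * x * f) := by simp only [mul_assoc]

theorem mutuallyInverse_of_factors_absorbing {a b x y f b' : S} (hxy : a = x * y)
    (hyx : b = y * x) (hbb' : b * b' = f) (hb'b : b' * b = f) (hbf : b * f = b)
    (hxf : x * f = x) (hfy : f * y = y) :
    y = y * (x * b') * y ∧ x * b' = x * b' * y * (x * b') ∧
      b = y * a * (x * b') ∧ a = x * b' * b * y := by
  refine ⟨?_, ?_, ?_, ?_⟩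
  · calc y = y * x * b' * y := by rw [← hyx, hbb', hfy]
      _ = y * (x * b') * y := by simp only [mul_assoc]
  · calc x * b' = x * (b' * (y * x)) * b' := by rw [← hyx, hb'b, hxf]
      _ = x * b' * y * (x * b') := by simp only [mul_assoc]
  · calc b = y * x * (y * x * b') := by rw [← hyx, hbb', hbf]
      _ = y * a * (x * b') := by rw [hxy]; simp only [mul_assoc]
  · calc a = x * (b' * b) * y := by rw [hb'b, hxf, hxy]
      _ = x * b' * b * y := by simp only [mul_assoc]

theorem PConj.of_eq_mul_mul {a b u v : S} (hu : u = u * v * u) (hb : b = u * a * v)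
    (ha : a = v * b * u) : PConj a b :=
  ⟨v * b, u, ha, calc
    b = u * v * u * a * v := by rw [← hu, hb]
    _ = u * (v * (u * a * v)) := by simp only [mul_assoc]
    _ = u * (v * b) := by rw [← hb]⟩

theorem pconj_iff_mutually_inverse (a b : S)
    (ha : IsGroupElement a) (hb : IsGroupElement b) :
    PConj a b ↔ ∃ u v : S, u = u * v * u ∧ v = v * u * v ∧
      b = u * a * v ∧ a = v * b * u := by
  constructor
  · intro h
    obtain ⟨e, a', -, hea, hae, -, ha'a⟩ := ha
    obtain ⟨f, b', hff, hfb, hbf, hbb', hb'b⟩ := hb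
    obtain ⟨x, y, hxy, hyx, hxf, hfy⟩ :=
      h.exists_factors_absorbing hea ha'a hae hff hfb hb'b hbf
    exact ⟨y, x * b', mutuallyInverse_of_factors_absorbing hxy hyx hbb' hb'b hbf hxf hfy⟩
  · rintro ⟨u, v, hu, -, hbu, hav⟩
    exact .of_eq_mul_mul hu hbu hav
end

section
/- Let S be a semigroup and a, b ∈ S group elements. Then a ∼ b (conjugate, i.e., in the transitive closure of primary conjugacy) if and only if a ∼ₚ b. That is, on group elements, primary conjugacy is transitive. -/
/-!
A chain of primary conjugations `a = x₁y₁, y₁x₁ = x₂y₂, …, yₖxₖ = b` gives `s = x₁⋯xₖ` and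
`t = yₖ⋯y₁` with `a s = s b`, `t a = b t`, `s t = aᵏ` and `t s = bᵏ`. If `a` and `b` are group
elements with inverses `a'` and `b'`, then `y = b'ᵏ t a` satisfies `a = s y` and `b = y s`: the
identity `a = a²ᵏ a'²ᵏ a` lets `s t = aᵏ` be used twice. Powers are taken in the monoid `WithOne S`.
-/


variable {S : Type*} [Semigroup S]

section Monoid

variable {M : Type*} [Monoid M]

theorem pow_mul_pow_mul_self {a a' : M} (hc : Commute a a') (h : a * a' * a = a) (n : ℕ) :
    a ^ n * a' ^ n * a = a := by
  rw [← hc.mul_pow]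
  induction n with
  | zero => rw [pow_zero, one_mul]
  | succ n ih => rw [pow_succ, mul_assoc, h, ih]

theorem pow_mul_pow_mul_pow_self {a a' : M} (hc : Commute a a') (h : a * a' * a = a) (n : ℕ) :
    a ^ n * a' ^ n * a ^ n = a ^ n := by
  rw [← hc.mul_pow, ← ((Commute.refl a).mul_left hc.symm).mul_pow, h]

def PowIntertwined (k : ℕ) (s t a b : M) : Prop :=
  a * s = s * b ∧ t * a = b * t ∧ s * t = a ^ k ∧ t * s = b ^ k

theorem PowIntertwined.trans_pconj {k : ℕ} {s t a u v : M}
    (h : PowIntertwined k s t a (u * v)) :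
    PowIntertwined (k + 1) (s * u) (v * t) a (v * u) := by
  obtain ⟨hs, ht, hst, hts⟩ := h
  refine ⟨?_, ?_, ?_, ?_⟩
  · rw [← mul_assoc, hs]; simp only [mul_assoc]
  · rw [mul_assoc, ht]; simp only [mul_assoc]
  · calc s * u * (v * t) = s * (u * v) * t := by simp only [mul_assoc]
      _ = a * s * t := by rw [← hs]
      _ = a ^ (k + 1) := by rw [mul_assoc, hst, pow_succ']
  · calc v * t * (s * u) = v * (u * v) ^ k * u := by rw [← hts]; simp only [mul_assoc]
      _ = (v * u) ^ (k + 1) := by rw [← mul_pow_mul, pow_succ, mul_assoc]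

theorem PowIntertwined.eq_mul_and_eq_mul {k : ℕ} {s t a b a' b' : M}
    (h : PowIntertwined k s t a b) (ha : Commute a a') (ha' : a * a' * a = a)
    (hb : Commute b b') (hb' : b * b' * b = b) :
    a = s * (b' ^ k * (t * a)) ∧ b = b' ^ k * (t * a) * s := by
  obtain ⟨hs, ht, hst, hts⟩ := h
  have hsk (x : M) : a ^ k * (s * x) = s * (b ^ k * x) := by
    rw [← mul_assoc, ← SemiconjBy.pow_right hs.symm k, mul_assoc]
  have htk (x : M) : b ^ k * (t * x) = t * (a ^ k * x) := by
    rw [← mul_assoc, ← SemiconjBy.pow_right ht k, mul_assoc]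
  constructor
  · calc a = a ^ k * (s * t) * (a' ^ k * a' ^ k * a) := by
          conv_lhs => rw [← pow_mul_pow_mul_self ha ha' (k + k)]
          rw [pow_add, pow_add, hst]; simp only [mul_assoc]
      _ = s * (b' ^ k * b ^ k * b ^ k) * t * (a' ^ k * a' ^ k * a) := by
          rw [← (hb.pow_pow k k).eq, pow_mul_pow_mul_pow_self hb hb']; simp only [mul_assoc, hsk]
      _ = s * (b' ^ k * (t * (a ^ k * a ^ k * (a' ^ k * a' ^ k * a)))) := by
          simp only [mul_assoc, htk]
      _ = s * (b' ^ k * (t * a)) := by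
          rw [← pow_add, ← pow_add, ← mul_assoc (a ^ (k + k)), pow_mul_pow_mul_self ha ha']
  · calc b = b' ^ k * (t * s) * b := by
          rw [hts, ← (hb.pow_pow k k).eq, pow_mul_pow_mul_self hb hb']
      _ = b' ^ k * (t * a) * s := by simp only [mul_assoc]; rw [hs]

end Monoid

theorem WithOne.exists_pow_mul_coe_eq_coe (x z : S) (k : ℕ) :
    ∃ w : S, (x : WithOne S) ^ k * z = w := by
  induction k generalizing z with
  | zero => exact ⟨z, one_mul _⟩
  | succ k ih =>
    obtain ⟨w, hw⟩ := ih (x * z)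
    exact ⟨w, by rw [pow_succ, mul_assoc, ← WithOne.coe_mul, hw]⟩

theorem IsGroupElement.exists_commute_mul_mul_self {a : S} (h : IsGroupElement a) :
    ∃ a' : S, Commute (a : WithOne S) a' ∧ (a * a' * a : WithOne S) = a := by
  obtain ⟨e, a', -, hea, -, haa', ha'a⟩ := h
  refine ⟨a', ?_, ?_⟩
  · change (a * a' : WithOne S) = a' * a
    exact_mod_cast haa'.trans ha'a.symm
  · norm_cast
    rw [haa', hea]

theorem SConj.exists_powIntertwined {a b : S} (h : SConj a b) :
    ∃ (s t : S) (k : ℕ), PowIntertwined k (s : WithOne S) t a b := by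
  induction h with
  | single hab =>
    obtain ⟨x, y, rfl, rfl⟩ := hab
    exact ⟨x, y, 1, by simp only [PowIntertwined, WithOne.coe_mul, mul_assoc, pow_one, and_self]⟩
  | tail _ hbc ih =>
    obtain ⟨s, t, k, h⟩ := ih
    obtain ⟨u, v, rfl, rfl⟩ := hbc
    refine ⟨s * u, v * t, k + 1, ?_⟩
    push_cast at h ⊢
    exact h.trans_pconj

theorem sconj_iff_pconj_of_group_elements (a b : S)
    (ha : IsGroupElement a) (hb : IsGroupElement b) :
    SConj a b ↔ PConj a b := by
  refine ⟨fun h => ?_, Relation.TransGen.single⟩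
  obtain ⟨s, t, k, hst⟩ := h.exists_powIntertwined
  obtain ⟨a', ha'⟩ := ha.exists_commute_mul_mul_self
  obtain ⟨b', hb'⟩ := hb.exists_commute_mul_mul_self
  obtain ⟨y, hy⟩ := WithOne.exists_pow_mul_coe_eq_coe b' (t * a) k
  obtain ⟨has, hbs⟩ := hst.eq_mul_and_eq_mul ha'.1 ha'.2 hb'.1 hb'.2
  push_cast at hy
  rw [hy] at has hbs
  exact ⟨s, y, WithOne.coe_injective has, WithOne.coe_injective hbs⟩
end

section
/- Let S be a semigroup and a, b ∈ S group elements. If a ∼ b then a D b (a and b are Green's D-related). -/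
variable {S : Type*} [Semigroup S]

/-!
If `a = xy` and `b = yx`, then `a^(k+2) = x b^(k+1) y` and `b^(k+2) = y a^(k+1) x`; composing these
identities along a chain of primary conjugacies gives `X, Y ∈ S¹` and `n` with `a^(n+1) = X b Y`
and `b^(n+1) = Y a X`. For group elements, with `f` the identity of the group containing `b`,
the element `c = f Y a` then lies in the L-class of `a` and in the R-class of `b`: a group element
is H-related to each of its powers, and `X b c = a^(n+2)`, `c X = b^(n+1)`.
-/

section Monoid

variable {M : Type*} [Monoid M]

def PowConj (n : ℕ) (a b : M) : Prop :=
  ∃ x y : M, ∀ k : ℕ, a ^ (k + n + 1) = x * b ^ (k + 1) * y ∧ b ^ (k + n + 1) = y * a ^ (k + 1) * x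

lemma powConj_mul_mul_comm (x y : M) : PowConj 1 (x * y) (y * x) := by
  have key (u v : M) (k : ℕ) : (u * v) ^ (k + 1 + 1) = u * (v * u) ^ (k + 1) * v := by
    rw [pow_succ, ← mul_assoc, mul_pow_mul]
  exact ⟨x, y, fun k => ⟨key x y k, key y x k⟩⟩

lemma PowConj.trans {n p : ℕ} {a b c : M} (hab : PowConj n a b) (hbc : PowConj p b c) :
    PowConj (n + p) a c := by
  obtain ⟨x, y, hxy⟩ := hab
  obtain ⟨u, v, huv⟩ := hbc
  refine ⟨x * u, v * y, fun k => ⟨?_, ?_⟩⟩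
  · rw [show k + (n + p) + 1 = (k + p) + n + 1 by omega, (hxy _).1, (huv k).1]
    simp only [mul_assoc]
  · rw [show k + (n + p) + 1 = (k + n) + p + 1 by omega, (huv _).2, (hxy k).2]
    simp only [mul_assoc]

lemma IsGroupElement.exists_mul_pow_eq {a : M} (ha : IsGroupElement a) (j : ℕ) :
    ∃ u : M, u * a ^ (j + 1) = a := by
  obtain ⟨e, a', -, hea, -, -, ha'a⟩ := ha
  refine ⟨a' ^ j, ?_⟩
  induction j with
  | zero => rw [pow_zero, one_mul, pow_one]
  | succ j ih =>
    calc a' ^ (j + 1) * a ^ (j + 1 + 1) = a' ^ j * ((a' * a) * a ^ (j + 1)) := by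
          rw [pow_succ, pow_succ' a]; simp only [mul_assoc]
      _ = a := by rw [ha'a, pow_succ' a, ← mul_assoc e, hea, ← pow_succ', ih]

lemma IsGroupElement.exists_pow_mul_eq {a : M} (ha : IsGroupElement a) (j : ℕ) :
    ∃ u : M, a ^ (j + 1) * u = a := by
  obtain ⟨e, a', -, -, hae, haa', -⟩ := ha
  refine ⟨a' ^ j, ?_⟩
  induction j with
  | zero => rw [pow_zero, mul_one, pow_one]
  | succ j ih =>
    calc a ^ (j + 1 + 1) * a' ^ (j + 1) = (a ^ (j + 1) * (a * a')) * a' ^ j := by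
          rw [pow_succ a, pow_succ' a' j]; simp only [mul_assoc]
      _ = a := by rw [haa', pow_succ a, mul_assoc _ a e, hae, ← pow_succ, ih]

end Monoid

lemma IsGroupElement.coe {a : S} (ha : IsGroupElement a) : IsGroupElement (a : WithOne S) := by
  obtain ⟨e, a', hee, hea, hae, haa', ha'a⟩ := ha
  exact ⟨e, a', by norm_cast⟩

lemma WithOne.exists_coe_eq_mul_coe (u : WithOne S) (s : S) : ∃ t : S, (t : WithOne S) = u * s := by
  cases u with
  | one => exact ⟨s, (one_mul _).symm⟩
  | coe u => exact ⟨u * s, WithOne.coe_mul u s⟩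

lemma SConj.exists_powConj {a b : S} (h : SConj a b) :
    ∃ n, PowConj n (a : WithOne S) (b : WithOne S) := by
  induction h with
  | single hab =>
    obtain ⟨x, y, rfl, rfl⟩ := hab
    have hxy := powConj_mul_mul_comm (x : WithOne S) y
    exact ⟨1, by simpa only [WithOne.coe_mul] using hxy⟩
  | tail _ hbc ih =>
    obtain ⟨x, y, rfl, rfl⟩ := hbc
    obtain ⟨n, hn⟩ := ih
    have hxy := powConj_mul_mul_comm (x : WithOne S) y
    exact ⟨n + 1, hn.trans (by simpa only [WithOne.coe_mul] using hxy)⟩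

lemma dRel_of_pow_eq_mul_mul {a b : S} {X Y : WithOne S} {n : ℕ}
    (ha : IsGroupElement a) (hb : IsGroupElement b)
    (hab : (a : WithOne S) ^ (n + 1) = X * b * Y) (hba : (b : WithOne S) ^ (n + 1) = Y * a * X) :
    DRel a b := by
  obtain ⟨u, hu⟩ := ha.coe.exists_mul_pow_eq (n + 1)
  obtain ⟨v, hv⟩ := hb.coe.exists_pow_mul_eq n
  obtain ⟨f, b', -, hfb, hbf, hbb', -⟩ := hb
  obtain ⟨t, ht⟩ := WithOne.exists_coe_eq_mul_coe Y a
  have hc : ((f * t : S) : WithOne S) = f * Y * a := by rw [WithOne.coe_mul, ht, mul_assoc]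
  have hbf' : (b : WithOne S) * f = b := by rw [← WithOne.coe_mul, hbf]
  have hfb' : (f : WithOne S) * b = b := by rw [← WithOne.coe_mul, hfb]
  have hXbc : X * b * ((f * t : S) : WithOne S) = (a : WithOne S) ^ (n + 1 + 1) :=
    calc X * b * ((f * t : S) : WithOne S) = X * (b * f) * Y * a := by
          rw [hc]; simp only [mul_assoc]
      _ = (a : WithOne S) ^ (n + 1 + 1) := by rw [hbf', ← hab, ← pow_succ]
  have hcX : ((f * t : S) : WithOne S) * X = (b : WithOne S) ^ (n + 1) :=
    calc ((f * t : S) : WithOne S) * X = f * (Y * a * X) := by rw [hc]; simp only [mul_assoc]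
      _ = (b : WithOne S) ^ (n + 1) := by rw [← hba, pow_succ', ← mul_assoc, hfb', ← pow_succ']
  refine ⟨f * t, ⟨⟨f * Y, hc.symm⟩, ⟨u * (X * b), by rw [mul_assoc, hXbc, hu]⟩⟩,
    ⟨⟨X * v, by rw [← mul_assoc, hcX, hv]⟩, ⟨b' * t, ?_⟩⟩⟩
  rw [← hbb', mul_assoc, WithOne.coe_mul, WithOne.coe_mul]

theorem dRel_of_sconj_group_elements (a b : S)
    (ha : IsGroupElement a) (hb : IsGroupElement b) (h : SConj a b) :
    DRel a b := by
  obtain ⟨n, X, Y, hXY⟩ := h.exists_powConj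
  exact dRel_of_pow_eq_mul_mul ha hb (by simpa only [zero_add, pow_one] using (hXY 0).1)
    (by simpa only [zero_add, pow_one] using (hXY 0).2)
end

section
/- Let S be a regular semigroup and a, b ∈ S group-bound elements. Then a ∼ b if and only if a·e_a ∼ b·e_b. -/
variable {S : Type*} [Semigroup S]

/-!
In a regular semigroup `a = (a * a') * a ∼ a * (a * a') ∼ a`, so `∼` is an equivalence
relation and it suffices to show `a ∼ a * e` when `a ^ n` lies in the group H-class with
identity `e`. Such an `e` commutes with `a`: `e * a = e * a * e = a * e`. For `n = 1`,
`a * e = a`. For `n ≥ 2` pick `u` with `a * u * a = a`; then `a = a * (u * a) ∼ u * a * a = b`,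
the power `b ^ (n - 1) = u * a ^ n` lies in the group H-class with identity `u * e * a`, and as
`e ∈ a S` gives `a * u * e = e`,
`b * (u * e * a) = (u * a) * (a * u * e * a) ∼ (a * u * e * a) * (u * a) = a * e`.
Induction on `n` gives `a ∼ b ∼ b * (u * e * a) ∼ a * e`.
-/

/-- `e` is the identity of the group H-class of `g`. Idempotency of `e` is not a field since it
follows: `e * e = e * (g * r) = g * r = e`. -/
structure IsGroupIdentity (e g : S) : Prop where
  left_identity : e * g = g
  right_identity : g * e = g
  exists_right_inverse : ∃ r, g * r = e
  exists_left_inverse : ∃ l, l * g = e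

section WithOne

variable {e g : S}

lemma mul_eq_of_exists_coe_mul_eq (he : e * e = e)
    (h : ∃ u : WithOne S, (e : WithOne S) * u = g) : e * g = g := by
  obtain ⟨u, hu⟩ := h
  rw [← WithOne.coe_inj, WithOne.coe_mul, ← hu, ← mul_assoc, ← WithOne.coe_mul, he]

lemma mul_eq_of_exists_mul_coe_eq (he : e * e = e)
    (h : ∃ u : WithOne S, u * (e : WithOne S) = g) : g * e = g := by
  obtain ⟨u, hu⟩ := h
  rw [← WithOne.coe_inj, WithOne.coe_mul, ← hu, mul_assoc, ← WithOne.coe_mul, he]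

lemma exists_mul_eq_of_exists_coe_mul_eq (he : e * e = e)
    (h : ∃ u : WithOne S, (g : WithOne S) * u = e) : ∃ r : S, g * r = e := by
  obtain ⟨u, hu⟩ := h
  induction u using WithOne.recOneCoe with
  | one => exact ⟨e, by rw [show g = e from WithOne.coe_inj.mp (by simpa using hu), he]⟩
  | coe r => exact ⟨r, WithOne.coe_inj.mp hu⟩

lemma exists_mul_eq_of_exists_mul_coe_eq (he : e * e = e)
    (h : ∃ u : WithOne S, u * (g : WithOne S) = e) : ∃ l : S, l * g = e := by
  obtain ⟨u, hu⟩ := h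
  induction u using WithOne.recOneCoe with
  | one => exact ⟨e, by rw [show g = e from WithOne.coe_inj.mp (by simpa using hu), he]⟩
  | coe l => exact ⟨l, WithOne.coe_inj.mp hu⟩

end WithOne

lemma HRel.isGroupIdentity {g e : S} (he : e * e = e) (h : HRel g e) : IsGroupIdentity e g :=
  ⟨mul_eq_of_exists_coe_mul_eq he h.2.2, mul_eq_of_exists_mul_coe_eq he h.1.2,
    exists_mul_eq_of_exists_coe_mul_eq he h.2.1, exists_mul_eq_of_exists_mul_coe_eq he h.1.1⟩

lemma commute_pw (a : S) : ∀ n, Commute a (pw a n)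
  | 0 => Commute.refl a
  | 1 => Commute.refl a
  | n + 2 => (commute_pw a (n + 1)).mul_right (Commute.refl a)

lemma pw_succ (a : S) {m : ℕ} (hm : 1 ≤ m) : pw a (m + 1) = pw a m * a := by
  obtain ⟨k, rfl⟩ := Nat.exists_eq_add_of_le' hm
  rfl

lemma pw_succ'_s15 (a : S) {m : ℕ} (hm : 1 ≤ m) : pw a (m + 1) = a * pw a m :=
  (pw_succ a hm).trans (commute_pw a m).eq.symm

lemma pConj_symm {a b : S} (h : PConj a b) : PConj b a :=
  let ⟨x, y, hxy, hyx⟩ := h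
  ⟨y, x, hyx, hxy⟩

lemma sConj_symm {a b : S} (h : SConj a b) : SConj b a := by
  induction h with
  | single h => exact .single (pConj_symm h)
  | tail _ h ih => exact .head (pConj_symm h) ih

lemma sConj_refl_of_eq_mul {a x y : S} (h : a = x * y) : SConj a a :=
  have hp : PConj a (y * x) := ⟨x, y, h, rfl⟩
  .head hp (.single (pConj_symm hp))

lemma IsGroupIdentity.commute {a e g : S} (h : IsGroupIdentity e g) (hag : Commute a g) :
    Commute a e := by
  obtain ⟨r, hr⟩ := h.exists_right_inverse
  obtain ⟨l, hl⟩ := h.exists_left_inverse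
  have hea : e * a = e * a * e := calc
    e * a = l * (a * g) := by rw [← hl, mul_assoc, hag.eq]
    _ = l * (a * g * e) := by rw [mul_assoc a, h.right_identity]
    _ = e * a * e := by rw [hag.eq, ← mul_assoc, ← mul_assoc, hl]
  have hae : a * e = e * a * e := calc
    a * e = a * g * r := by rw [mul_assoc, hr]
    _ = e * (a * g) * r := by rw [hag.eq, ← mul_assoc e, h.left_identity]
    _ = e * a * e := by rw [← mul_assoc, mul_assoc _ g, hr]
  exact hae.trans hea.symm

lemma pConj_mul_mul_of_mul_mul_eq {a u : S} (hu : a * u * a = a) : PConj a (u * a * a) :=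
  ⟨a, u * a, by rw [← mul_assoc, hu], rfl⟩

lemma pw_mul_mul_of_mul_mul_eq {a u : S} (hu : a * u * a = a) {m : ℕ} (hm : 1 ≤ m) :
    pw (u * a * a) m = u * pw a (m + 1) := by
  induction m, hm using Nat.le_induction with
  | base => exact mul_assoc u a a
  | succ m hm ih => calc
      pw (u * a * a) (m + 1) = u * pw a (m + 1) * (u * a * a) := by rw [pw_succ _ hm, ih]
      _ = u * (pw a m * (a * u * a)) * a := by rw [pw_succ a hm]; simp only [mul_assoc]
      _ = u * pw a (m + 1 + 1) := by
        rw [hu, ← pw_succ a hm, mul_assoc, ← pw_succ a (by omega)]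

namespace IsGroupIdentity

variable {a c e u : S}

lemma mul_mul_eq (h : IsGroupIdentity e (a * c)) (hu : a * u * a = a) : a * u * e = e := by
  obtain ⟨r, hr⟩ := h.exists_right_inverse
  rw [← hr, ← mul_assoc, ← mul_assoc, hu]

lemma descend (h : IsGroupIdentity e (a * c)) (hu : a * u * a = a) (hc : Commute a c) :
    IsGroupIdentity (u * e * a) (u * (a * c)) := by
  have hae : a * e = e * a := (h.commute ((Commute.refl a).mul_right hc)).eq
  obtain ⟨r, hr⟩ := h.exists_right_inverse
  obtain ⟨l, hl⟩ := h.exists_left_inverse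
  refine ⟨?_, ?_, ⟨r * a, ?_⟩, ⟨u * a * l * a, ?_⟩⟩
  · calc u * e * a * (u * (a * c)) = u * (e * ((a * u * a) * c)) := by simp only [mul_assoc]
      _ = u * (a * c) := by rw [hu, h.left_identity]
  · calc u * (a * c) * (u * e * a) = u * c * (a * u * e) * a := by
          rw [hc.eq]; simp only [mul_assoc]
      _ = u * (a * c * e) := by
          rw [h.mul_mul_eq hu, mul_assoc _ e, ← hae, hc.eq]; simp only [mul_assoc]
      _ = u * (a * c) := by rw [h.right_identity]
  · calc u * (a * c) * (r * a) = u * (a * c * r) * a := by simp only [mul_assoc]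
      _ = u * e * a := by rw [hr]
  · calc u * a * l * a * (u * (a * c)) = u * a * (l * ((a * u * a) * c)) := by
          simp only [mul_assoc]
      _ = u * e * a := by rw [hu, hl, mul_assoc, hae, mul_assoc]

lemma pConj_mul_descend (h : IsGroupIdentity e (a * c)) (hu : a * u * a = a) (hc : Commute a c) :
    PConj (u * a * a * (u * e * a)) (a * e) := by
  refine ⟨u * a, a * (u * e * a), by simp only [mul_assoc], ?_⟩
  calc a * e = e * (a * u * a) := by rw [hu, (h.commute ((Commute.refl a).mul_right hc)).eq]
    _ = a * u * e * (a * u * a) := by rw [h.mul_mul_eq hu]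
    _ = a * (u * e * a) * (u * a) := by simp only [mul_assoc]

end IsGroupIdentity

theorem sConj_mul_of_isGroupIdentity (hreg : ∀ x : S, ∃ y : S, x = x * y * x) {n : ℕ}
    (hn : 1 ≤ n) {a e : S} (h : IsGroupIdentity e (pw a n)) : SConj a (a * e) := by
  induction n, hn using Nat.le_induction generalizing a e with
  | base =>
    obtain ⟨y, hy⟩ := hreg a
    rw [show a * e = a from h.right_identity]
    exact sConj_refl_of_eq_mul hy
  | succ k hk ih =>
    obtain ⟨u, hu⟩ := hreg a
    rw [pw_succ'_s15 a hk] at h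
    have hb : IsGroupIdentity (u * e * a) (pw (u * a * a) k) := by
      rw [pw_mul_mul_of_mul_mul_eq hu.symm hk, pw_succ'_s15 a hk]
      exact h.descend hu.symm (commute_pw a k)
    exact .head (pConj_mul_mul_of_mul_mul_eq hu.symm)
      ((ih hb).tail (h.pConj_mul_descend hu.symm (commute_pw a k)))

theorem sconj_iff_sconj_mul_idempotents
    (hreg : ∀ x : S, ∃ y : S, x = x * y * x)
    (a b ea eb : S) (ta tb : ℕ) (hta : 1 ≤ ta) (htb : 1 ≤ tb)
    (hea : ea * ea = ea) (hHa : HRel (pw a ta) ea)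
    (heb : eb * eb = eb) (hHb : HRel (pw b tb) eb) :
    SConj a b ↔ SConj (a * ea) (b * eb) := by
  have ha := sConj_mul_of_isGroupIdentity hreg hta (hHa.isGroupIdentity hea)
  have hb := sConj_mul_of_isGroupIdentity hreg htb (hHb.isGroupIdentity heb)
  exact ⟨fun h => ((sConj_symm ha).trans h).trans hb,
    fun h => (ha.trans h).trans (sConj_symm hb)⟩
end

section
/- Let S be a regular epigroup and a, b ∈ S. Then a ∼ b if and only if there exist mutually inverse elements u, v ∈ S such that a·e_a = u·(b·e_b)·v and b·e_b = v·(a·e_a)·u. -/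
variable {S : Type*} [Semigroup S]

/-! ### Auxiliary development -/

section EpigroupAux

namespace EpiAux

/-! #### Power lemmas -/

lemma pw_one (a : S) : pw a 1 = a := rfl

lemma pw_succ (a : S) {n : ℕ} (h : 1 ≤ n) : pw a (n+1) = pw a n * a := by
  match n, h with
  | (m+1), _ => rfl

lemma pw_succ' (a : S) : ∀ {n : ℕ}, 1 ≤ n → pw a (n+1) = a * pw a n := by
  intro n
  induction n with
  | zero => intro h; exact absurd h (by norm_num)
  | succ m ih =>
    intro _
    rcases Nat.eq_zero_or_pos m with hm | hm
    · subst hm; rfl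
    · have hc : pw a m * a = a * pw a m := by rw [← pw_succ a hm, ih hm]
      rw [pw_succ a (by omega), ih hm, mul_assoc, hc]

lemma pw_add (a : S) {m n : ℕ} (hm : 1 ≤ m) (hn : 1 ≤ n) :
    pw a (m+n) = pw a m * pw a n := by
  induction n with
  | zero => omega
  | succ k ih =>
    rcases Nat.eq_zero_or_pos k with hk | hk
    · subst hk; rw [pw_one, pw_succ a hm]
    · have : m + (k+1) = (m+k) + 1 := by omega
      rw [this, pw_succ a (by omega), ih hk, mul_assoc, ← pw_succ a hk]

lemma pw_swap (x y : S) : ∀ {n : ℕ}, 1 ≤ n → pw (y*x) n * y = y * pw (x*y) n := by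
  intro n
  induction n with
  | zero => omega
  | succ k ih =>
    intro _
    rcases Nat.eq_zero_or_pos k with hk | hk
    · subst hk; exact mul_assoc y x y
    · calc pw (y*x) (k+1) * y = (pw (y*x) k * y) * (x*y) := by
            rw [pw_succ (y*x) hk]; simp only [mul_assoc]
        _ = (y * pw (x*y) k) * (x*y) := by rw [ih hk]
        _ = y * pw (x*y) (k+1) := by
            rw [pw_succ (x*y) hk]; simp only [mul_assoc]

/-- `e` is the idempotent of the group H-class containing `a^t`,
with `w` a normalized group inverse of `a^t`. -/
def Good (a e w : S) (t : ℕ) : Prop :=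
  1 ≤ t ∧ e * e = e ∧ e * pw a t = pw a t ∧ pw a t * e = pw a t ∧
  pw a t * w = e ∧ w * pw a t = e ∧ e * w = w ∧ w * e = w

namespace Good

variable {a e w : S} {t : ℕ}

lemma t_pos (h : Good a e w t) : 1 ≤ t := h.1
lemma idem (h : Good a e w t) : e * e = e := h.2.1
lemma e_pw (h : Good a e w t) : e * pw a t = pw a t := h.2.2.1
lemma pw_e (h : Good a e w t) : pw a t * e = pw a t := h.2.2.2.1
lemma pw_w (h : Good a e w t) : pw a t * w = e := h.2.2.2.2.1
lemma w_pw (h : Good a e w t) : w * pw a t = e := h.2.2.2.2.2.1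
lemma e_w (h : Good a e w t) : e * w = w := h.2.2.2.2.2.2.1
lemma w_e (h : Good a e w t) : w * e = w := h.2.2.2.2.2.2.2

/-- `e` commutes with `a`. -/
lemma e_comm (h : Good a e w t) : a * e = e * a := by
  have hA : e * (a * pw a t) = a * pw a t := by
    rw [← pw_succ' a h.t_pos, pw_succ a h.t_pos, ← mul_assoc, h.e_pw,
      ← pw_succ a h.t_pos]
  have hA' : (pw a t * a) * e = pw a t * a := by
    rw [← pw_succ a h.t_pos, pw_succ' a h.t_pos, mul_assoc, h.pw_e,
      ← pw_succ' a h.t_pos]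
  have t1 : ((a * pw a t) * w) * e = a * e := by
    rw [mul_assoc a (pw a t) w, h.pw_w, mul_assoc, h.idem]
  have t2 : e * ((a * pw a t) * w) = (a * pw a t) * w := by
    rw [← mul_assoc, hA]
  have k2 : e * (a * e) = a * e := by
    calc e * (a * e) = e * (((a * pw a t) * w) * e) := by rw [t1]
      _ = (e * ((a * pw a t) * w)) * e := by rw [← mul_assoc]
      _ = ((a * pw a t) * w) * e := by rw [t2]
      _ = a * e := t1
  have t3 : e * (w * (pw a t * a)) = e * a := by
    rw [← mul_assoc, ← mul_assoc, h.e_w, h.w_pw]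
  have t4 : e * (w * ((pw a t * a) * e)) = e * (w * (pw a t * a)) := by rw [hA']
  have k1 : (e * a) * e = e * a := by
    calc (e * a) * e = (e * (w * (pw a t * a))) * e := by rw [t3]
      _ = e * (w * ((pw a t * a) * e)) := by simp only [mul_assoc]
      _ = e * (w * (pw a t * a)) := t4
      _ = e * a := t3
  calc a * e = e * (a * e) := k2.symm
    _ = (e * a) * e := by rw [mul_assoc]
    _ = e * a := k1

lemma comm_pw (h : Good a e w t) : ∀ {n : ℕ}, 1 ≤ n → pw a n * e = e * pw a n := by
  intro n
  induction n with
  | zero => omega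
  | succ k ih =>
    intro _
    rcases Nat.eq_zero_or_pos k with hk | hk
    · subst hk; exact h.e_comm
    · calc pw a (k+1) * e = pw a k * (a * e) := by rw [pw_succ a hk, mul_assoc]
        _ = pw a k * (e * a) := by rw [h.e_comm]
        _ = (pw a k * e) * a := by rw [mul_assoc]
        _ = (e * pw a k) * a := by rw [ih hk]
        _ = e * pw a (k+1) := by rw [mul_assoc, ← pw_succ a hk]

lemma e_pw_of_le (h : Good a e w t) {n : ℕ} (hn : t ≤ n) : e * pw a n = pw a n := by
  rcases Nat.eq_or_lt_of_le hn with rfl | hlt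
  · exact h.e_pw
  · have hr : n = t + (n - t) := by omega
    rw [hr, pw_add a h.t_pos (by omega), ← mul_assoc, h.e_pw]

lemma pw_e_of_le (h : Good a e w t) {n : ℕ} (hn : t ≤ n) : pw a n * e = pw a n := by
  rcases Nat.eq_or_lt_of_le hn with rfl | hlt
  · exact h.pw_e
  · have hr : n = (n - t) + t := by omega
    rw [hr, pw_add a (by omega) h.t_pos, mul_assoc, h.pw_e]

end Good

lemma e_pww {a e w : S} {t : ℕ} (h : Good a e w t) :
    ∀ {k : ℕ}, 1 ≤ k → e * pw w k = pw w k := by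
  intro k
  induction k with
  | zero => omega
  | succ j ih =>
    intro _
    rcases Nat.eq_zero_or_pos j with hj | hj
    · subst hj; exact h.e_w
    · rw [pw_succ' w hj, ← mul_assoc, h.e_w]

lemma pwa_pww {a e w : S} {t : ℕ} (h : Good a e w t) :
    ∀ {k : ℕ}, 1 ≤ k → pw a (k*t) * pw w k = e := by
  intro k
  induction k with
  | zero => omega
  | succ j ih =>
    intro _
    rcases Nat.eq_zero_or_pos j with hj | hj
    · subst hj; simpa [pw_one] using h.pw_w
    · have hjt : 1 ≤ j * t := Nat.le_trans hj (Nat.le_mul_of_pos_right j h.t_pos)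
      have hk : (j+1)*t = j*t + t := by ring
      rw [hk, pw_add a hjt h.t_pos, pw_succ' w hj, mul_assoc,
        ← mul_assoc (pw a t) w (pw w j), h.pw_w, e_pww h hj]
      exact ih hj

lemma pww_pwa {a e w : S} {t : ℕ} (h : Good a e w t) :
    ∀ {k : ℕ}, 1 ≤ k → pw w k * pw a (k*t) = e := by
  intro k
  induction k with
  | zero => omega
  | succ j ih =>
    intro _
    rcases Nat.eq_zero_or_pos j with hj | hj
    · subst hj; simpa [pw_one] using h.w_pw
    · have hjt : 1 ≤ j * t := Nat.le_trans hj (Nat.le_mul_of_pos_right j h.t_pos)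
      have hk : (j+1)*t = t + j*t := by ring
      rw [hk, pw_add a h.t_pos hjt, pw_succ w hj, mul_assoc,
        ← mul_assoc w (pw a t) (pw a (j*t)), h.w_pw,
        h.e_pw_of_le (by nlinarith : t ≤ j*t)]
      exact ih hj

/-- Power-up: good data at `t` gives good data at any `n ≥ t`. -/
lemma good_up {a e w : S} {t n : ℕ} (h : Good a e w t) (hn : t ≤ n) :
    ∃ w' : S, Good a e w' n := by
  have hn1 : 1 ≤ n := le_trans h.t_pos hn
  set k := n + 1 with hkdef
  have hkt : n < k * t := by
    have : k ≤ k * t := Nat.le_mul_of_pos_right k h.t_pos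
    omega
  set m := k * t - n with hmdef
  have hm1 : 1 ≤ m := by omega
  have hmn : m + n = k * t := by omega
  have hnm : n + m = k * t := by omega
  have hk1 : 1 ≤ k := by omega
  set r := pw a m * pw w k with hrdef
  have hr : pw a n * r = e := by
    rw [hrdef, ← mul_assoc, ← pw_add a hn1 hm1, hnm, pwa_pww h hk1]
  have hl : (pw w k * pw a m) * pw a n = e := by
    rw [mul_assoc, ← pw_add a hm1 hn1, hmn, pww_pwa h hk1]
  refine ⟨e * (r * e), ⟨hn1, h.idem, h.e_pw_of_le hn, h.pw_e_of_le hn, ?_, ?_, ?_, ?_⟩⟩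
  · rw [← mul_assoc, h.pw_e_of_le hn, ← mul_assoc, hr, h.idem]
  · set l' := e * ((pw w k * pw a m) * e) with hl'def
    have hl'A : l' * pw a n = e := by
      rw [hl'def, mul_assoc, mul_assoc, h.e_pw_of_le hn, hl, h.idem]
    have hr' : pw a n * (e * (r * e)) = e := by
      rw [← mul_assoc, h.pw_e_of_le hn, ← mul_assoc, hr, h.idem]
    have hlr : l' = e * (r * e) := by
      calc l' = l' * e := by rw [hl'def]; simp only [mul_assoc]; rw [h.idem]
        _ = l' * (pw a n * (e * (r * e))) := by rw [hr']
        _ = (l' * pw a n) * (e * (r * e)) := by rw [← mul_assoc]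
        _ = e * (e * (r * e)) := by rw [hl'A]
        _ = e * (r * e) := by rw [← mul_assoc, h.idem]
    rw [← hlr, hl'A]
  · rw [← mul_assoc, h.idem]
  · rw [mul_assoc, mul_assoc, h.idem]

/-- The eventual idempotent of an element is unique. -/
lemma good_unique {a e w f v : S} {t s : ℕ}
    (h1 : Good a e w t) (h2 : Good a f v s) : e = f := by
  obtain ⟨w', h1'⟩ := good_up h1 (le_max_left t s)
  obtain ⟨v', h2'⟩ := good_up h2 (le_max_right t s)
  have hef1 : e * f = e := by
    rw [← h1'.w_pw, mul_assoc, h2'.pw_e]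
  have hef2 : e * f = f := by
    rw [← h2'.pw_w, ← mul_assoc, h1'.e_pw]
  rw [← hef1, hef2]

/-- The key computation: if `a = x*y`, `b = y*x` then `x*(f*y) = a*e`. -/
lemma G0 {a b x y e w f v : S} {n : ℕ} (hxy : a = x*y) (hyx : b = y*x)
    (ha : Good a e w n) (hb : Good b f v n) : x*(f*y) = a*e := by
  have sw : pw b n * y = y * pw a n := by
    rw [hxy, hyx]; exact pw_swap x y hb.t_pos
  have fy : f * y = v * (y * pw a n) := by
    rw [← sw, ← mul_assoc, hb.w_pw]
  have me : (x*(f*y)) * e = x*(f*y) := by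
    rw [fy, mul_assoc, mul_assoc, mul_assoc, ha.pw_e]
  have mA : (x*(f*y)) * pw a n = a * pw a n := by
    calc (x*(f*y)) * pw a n = x * (f * (y * pw a n)) := by
          simp only [mul_assoc]
      _ = x * (f * (pw b n * y)) := by rw [sw]
      _ = x * ((f * pw b n) * y) := by rw [mul_assoc]
      _ = x * (pw b n * y) := by rw [hb.e_pw]
      _ = x * (y * pw a n) := by rw [sw]
      _ = (x * y) * pw a n := by rw [mul_assoc]
      _ = a * pw a n := by rw [hxy]
  calc x*(f*y) = (x*(f*y)) * e := me.symm
    _ = (x*(f*y)) * (pw a n * w) := by rw [ha.pw_w]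
    _ = ((x*(f*y)) * pw a n) * w := by rw [← mul_assoc]
    _ = (a * pw a n) * w := by rw [mA]
    _ = a * (pw a n * w) := by rw [mul_assoc]
    _ = a * e := by rw [ha.pw_w]

/-- Step lemma: primary conjugacy descends to the group parts. -/
lemma pconj_step {a b x y e w f v : S} {n : ℕ} (hxy : a = x*y) (hyx : b = y*x)
    (ha : Good a e w n) (hb : Good b f v n) : PConj (a*e) (b*f) := by
  refine ⟨x, f*y, (G0 hxy hyx ha hb).symm, ?_⟩
  rw [mul_assoc, ← hyx, hb.e_comm]

/-! #### Group element data -/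

def GrpData (g e gi : S) : Prop :=
  e*e = e ∧ e*g = g ∧ g*e = g ∧ g*gi = e ∧ gi*g = e ∧ e*gi = gi ∧ gi*e = gi

namespace GrpData
variable {g e gi : S}
lemma idem (h : GrpData g e gi) : e*e = e := h.1
lemma e_g (h : GrpData g e gi) : e*g = g := h.2.1
lemma g_e (h : GrpData g e gi) : g*e = g := h.2.2.1
lemma g_gi (h : GrpData g e gi) : g*gi = e := h.2.2.2.1
lemma gi_g (h : GrpData g e gi) : gi*g = e := h.2.2.2.2.1
lemma e_gi (h : GrpData g e gi) : e*gi = gi := h.2.2.2.2.2.1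
lemma gi_e (h : GrpData g e gi) : gi*e = gi := h.2.2.2.2.2.2
end GrpData

lemma grpData_unique {g e gi f fi : S} (h1 : GrpData g e gi) (h2 : GrpData g f fi) :
    e = f := by
  have hef1 : e * f = e := by rw [← h1.gi_g, mul_assoc, h2.g_e]
  have hef2 : e * f = f := by rw [← h2.g_gi, ← mul_assoc, h1.e_g]
  rw [← hef1, hef2]

/-- group data for `a*e`. -/
lemma grpData_ae {a e w : S} {t : ℕ} (h : Good a e w t) :
    ∃ z : S, GrpData (a*e) e z := by
  obtain ⟨w', h'⟩ := good_up h (Nat.le_succ t)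
  have hea : e * (a*e) = a*e := by
    rw [h.e_comm, ← mul_assoc, h.idem]
  have hae : (a*e) * e = a*e := by rw [mul_assoc, h.idem]
  have hr : (a*e) * (pw a t * w') = e := by
    calc (a*e) * (pw a t * w') = ((a * (e * pw a t)) * w') := by
          simp only [mul_assoc]
      _ = (a * pw a t) * w' := by rw [h.e_pw]
      _ = pw a (t+1) * w' := by rw [← pw_succ' a h.t_pos]
      _ = e := h'.pw_w
  have hl : (w' * pw a t) * (a*e) = e := by
    calc (w' * pw a t) * (a*e) = w' * ((pw a t * a) * e) := by
          simp only [mul_assoc]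
      _ = w' * (pw a (t+1) * e) := by rw [← pw_succ a h.t_pos]
      _ = w' * pw a (t+1) := by rw [h'.pw_e]
      _ = e := h'.w_pw
  set r := pw a t * w' with hrdef
  set z := e * (r * e) with hzdef
  have hez : e * z = z := by rw [hzdef, ← mul_assoc, h.idem]
  have hze : z * e = z := by rw [hzdef]; simp only [mul_assoc]; rw [h.idem]
  have haez : (a*e) * z = e := by
    calc (a*e)*z = ((a*e)*e) * (r*e) := by rw [hzdef]; simp only [mul_assoc]
      _ = (a*e)*(r*e) := by rw [hae]
      _ = ((a*e)*r)*e := by rw [← mul_assoc]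
      _ = e := by rw [hr, h.idem]
  set l' := e * ((w' * pw a t) * e) with hldef
  have hl'ae : l' * (a*e) = e := by
    calc l' * (a*e) = e * ((w' * pw a t) * (e * (a*e))) := by
          rw [hldef]; simp only [mul_assoc]
      _ = e * ((w' * pw a t) * (a*e)) := by rw [hea]
      _ = e := by rw [hl, h.idem]
  have hl'z : l' = z := by
    calc l' = l' * e := by rw [hldef]; simp only [mul_assoc]; rw [h.idem]
      _ = l' * ((a*e)*z) := by rw [haez]
      _ = (l' * (a*e)) * z := by rw [← mul_assoc]
      _ = e * z := by rw [hl'ae]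
      _ = z := hez
  exact ⟨z, h.idem, hea, hae, haez, by rw [← hl'z]; exact hl'ae, hez, hze⟩

/-- The mutually-inverse construction for one primary-conjugacy step
between group elements. -/
lemma Mstep {g h x y e f gi hi : S} (hg : GrpData g e gi) (hh : GrpData h f hi)
    (hxy : g = x*y) (hyx : h = y*x) :
    ∃ u v : S, g = u*(h*v) ∧ h = v*(g*u) ∧ u*v = e ∧ v*u = f ∧
      e*u = u ∧ u*f = u ∧ f*v = v ∧ v*e = v := by
  have s2 : x*(h*y) = g*g := by rw [hyx, hxy]; simp only [mul_assoc]
  have hr1 : h*(y*(e*x)) = h*h := by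
    calc h*(y*(e*x)) = y*((x*y)*(e*x)) := by rw [hyx]; simp only [mul_assoc]
      _ = y*(g*(e*x)) := by rw [← hxy]
      _ = y*((g*e)*x) := by rw [← mul_assoc g e x]
      _ = y*(g*x) := by rw [hg.g_e]
      _ = h*h := by rw [hxy, hyx]; simp only [mul_assoc]
  have rh : (y*(e*x))*h = h*h := by
    calc (y*(e*x))*h = y*(e*((x*y)*x)) := by rw [hyx]; simp only [mul_assoc]
      _ = y*(e*(g*x)) := by rw [← hxy]
      _ = y*((e*g)*x) := by rw [← mul_assoc e g x]
      _ = y*(g*x) := by rw [hg.e_g]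
      _ = h*h := by rw [hxy, hyx]; simp only [mul_assoc]
  refine ⟨gi*(x*f), f*(y*e), ?_, ?_, ?_, ?_, ?_, ?_, ?_, ?_⟩
  · have s1 : f*(h*(f*(y*e))) = h*(y*e) := by
      rw [← mul_assoc f h, hh.e_g, ← mul_assoc h f, hh.g_e]
    refine Eq.symm ?_
    calc (gi*(x*f))*(h*(f*(y*e)))
        = gi*(x*(f*(h*(f*(y*e))))) := by simp only [mul_assoc]
      _ = gi*(x*(h*(y*e))) := by rw [s1]
      _ = gi*((x*(h*y))*e) := by simp only [mul_assoc]
      _ = gi*((g*g)*e) := by rw [s2]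
      _ = gi*(g*(g*e)) := by rw [mul_assoc]
      _ = gi*(g*g) := by rw [hg.g_e]
      _ = (gi*g)*g := by rw [← mul_assoc]
      _ = g := by rw [hg.gi_g, hg.e_g]
  · have frf : f*((y*(e*x))*f) = h := by
      calc f*((y*(e*x))*f)
          = (hi*h)*((y*(e*x))*f) := by rw [hh.gi_g]
        _ = hi*((h*(y*(e*x)))*f) := by simp only [mul_assoc]
        _ = hi*((h*h)*f) := by rw [hr1]
        _ = hi*(h*(h*f)) := by rw [mul_assoc]
        _ = hi*(h*h) := by rw [hh.g_e]
        _ = (hi*h)*h := by rw [← mul_assoc]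
        _ = h := by rw [hh.gi_g, hh.e_g]
    refine Eq.symm ?_
    calc (f*(y*e))*(g*(gi*(x*f)))
        = f*(y*(e*(g*(gi*(x*f))))) := by simp only [mul_assoc]
      _ = f*(y*(g*(gi*(x*f)))) := by rw [← mul_assoc e g, hg.e_g]
      _ = f*(y*((g*gi)*(x*f))) := by rw [← mul_assoc g gi]
      _ = f*(y*(e*(x*f))) := by rw [hg.g_gi]
      _ = f*((y*(e*x))*f) := by simp only [mul_assoc]
      _ = h := frf
  · have gs : g*(x*(f*y)) = g*g := by
      calc g*(x*(f*y)) = x*((y*x)*(f*y)) := by rw [hxy]; simp only [mul_assoc]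
        _ = x*(h*(f*y)) := by rw [← hyx]
        _ = x*((h*f)*y) := by rw [← mul_assoc h f y]
        _ = x*(h*y) := by rw [hh.g_e]
        _ = g*g := s2
    have se : e*(x*(f*y)) = g := by
      calc e*(x*(f*y)) = (gi*g)*(x*(f*y)) := by rw [hg.gi_g]
        _ = gi*(g*(x*(f*y))) := by rw [mul_assoc]
        _ = gi*(g*g) := by rw [gs]
        _ = (gi*g)*g := by rw [← mul_assoc]
        _ = g := by rw [hg.gi_g, hg.e_g]
    have gis : gi*(x*(f*y)) = e := by
      calc gi*(x*(f*y)) = (gi*e)*(x*(f*y)) := by rw [hg.gi_e]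
        _ = gi*(e*(x*(f*y))) := by rw [mul_assoc]
        _ = gi*g := by rw [se]
        _ = e := hg.gi_g
    calc (gi*(x*f))*(f*(y*e))
        = gi*(x*(f*(f*(y*e)))) := by simp only [mul_assoc]
      _ = gi*(x*(f*(y*e))) := by rw [← mul_assoc f f, hh.idem]
      _ = (gi*(x*(f*y)))*e := by simp only [mul_assoc]
      _ = e*e := by rw [gis]
      _ = e := hg.idem
  · have hr' : h*(y*(gi*x)) = y*(e*x) := by
      calc h*(y*(gi*x)) = y*((x*y)*(gi*x)) := by rw [hyx]; simp only [mul_assoc]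
        _ = y*(g*(gi*x)) := by rw [← hxy]
        _ = y*((g*gi)*x) := by rw [← mul_assoc g gi x]
        _ = y*(e*x) := by rw [hg.g_gi]
    have fr2 : f*(y*(gi*x)) = hi*(y*(e*x)) := by
      rw [← hh.gi_g, mul_assoc, hr']
    have rf : (y*(e*x))*f = h := by
      rw [← hh.g_gi, ← mul_assoc, rh, mul_assoc, hh.g_gi, hh.g_e]
    calc (f*(y*e))*(gi*(x*f))
        = f*(y*(e*(gi*(x*f)))) := by simp only [mul_assoc]
      _ = f*(y*(gi*(x*f))) := by rw [← mul_assoc e gi, hg.e_gi]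
      _ = (f*(y*(gi*x)))*f := by simp only [mul_assoc]
      _ = (hi*(y*(e*x)))*f := by rw [fr2]
      _ = hi*((y*(e*x))*f) := by rw [mul_assoc]
      _ = hi*h := by rw [rf]
      _ = f := hh.gi_g
  · rw [← mul_assoc, hg.e_gi]
  · calc (gi*(x*f))*f = gi*(x*(f*f)) := by simp only [mul_assoc]
      _ = gi*(x*f) := by rw [hh.idem]
  · rw [← mul_assoc, hh.idem]
  · calc (f*(y*e))*e = f*(y*(e*e)) := by simp only [mul_assoc]
      _ = f*(y*e) := by rw [hg.idem]

def Conn (g h : S) : Prop :=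
  ∃ e gi f hi u v : S, GrpData g e gi ∧ GrpData h f hi ∧
    g = u*(h*v) ∧ h = v*(g*u) ∧ u*v = e ∧ v*u = f ∧
    e*u = u ∧ u*f = u ∧ f*v = v ∧ v*e = v

lemma conn_trans {g h k : S} (h1 : Conn g h) (h2 : Conn h k) : Conn g k := by
  obtain ⟨e, gi, f, hi, u₁, v₁, hGg, hGh, hguv, hhvu, huv, hvu, heu, huf, hfv, hve⟩ := h1
  obtain ⟨f₂, hi₂, ek, ki, u₂, v₂, hGh₂, hGk, hhuv, hkvu, huv₂, hvu₂, heu₂, huf₂, hfv₂, hve₂⟩ := h2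
  have hff : f = f₂ := grpData_unique hGh hGh₂
  subst hff
  refine ⟨e, gi, ek, ki, u₁*u₂, v₂*v₁, hGg, hGk, ?_, ?_, ?_, ?_, ?_, ?_, ?_, ?_⟩
  · calc g = u₁*(h*v₁) := hguv
      _ = u₁*((u₂*(k*v₂))*v₁) := by rw [← hhuv]
      _ = (u₁*u₂)*(k*(v₂*v₁)) := by simp only [mul_assoc]
  · calc k = v₂*(h*u₂) := hkvu
      _ = v₂*((v₁*(g*u₁))*u₂) := by rw [← hhvu]
      _ = (v₂*v₁)*(g*(u₁*u₂)) := by simp only [mul_assoc]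
  · calc (u₁*u₂)*(v₂*v₁) = u₁*((u₂*v₂)*v₁) := by simp only [mul_assoc]
      _ = u₁*(f*v₁) := by rw [huv₂]
      _ = (u₁*f)*v₁ := by rw [← mul_assoc]
      _ = u₁*v₁ := by rw [huf]
      _ = e := huv
  · calc (v₂*v₁)*(u₁*u₂) = v₂*((v₁*u₁)*u₂) := by simp only [mul_assoc]
      _ = v₂*(f*u₂) := by rw [hvu]
      _ = v₂*u₂ := by rw [heu₂]
      _ = ek := hvu₂
  · rw [← mul_assoc, heu]
  · rw [mul_assoc, huf₂]
  · rw [← mul_assoc, hfv₂]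
  · rw [mul_assoc, hve]

lemma conn_of_pconj {a b e w f v : S} {t s : ℕ} (hp : PConj a b)
    (ha : Good a e w t) (hb : Good b f v s) : Conn (a*e) (b*f) := by
  obtain ⟨x, y, hxy, hyx⟩ := hp
  obtain ⟨w', ha'⟩ := good_up ha (le_max_left t s)
  obtain ⟨v', hb'⟩ := good_up hb (le_max_right t s)
  obtain ⟨z₁, hzg⟩ := grpData_ae ha
  obtain ⟨z₂, hzh⟩ := grpData_ae hb
  have h1 : a*e = x*(f*y) := (G0 hxy hyx ha' hb').symm
  have h2 : b*f = (f*y)*x := by rw [mul_assoc, ← hyx, hb.e_comm]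
  obtain ⟨u, vv, c1, c2, c3, c4, c5, c6, c7, c8⟩ := Mstep hzg hzh h1 h2
  exact ⟨e, z₁, f, z₂, u, vv, hzg, hzh, c1, c2, c3, c4, c5, c6, c7, c8⟩

/-- Good data from group-boundedness. -/
lemma good_of_bound (hep : ∀ x : S, GroupBound x) (a : S) :
    ∃ t : ℕ, ∃ e w : S, Good a e w t := by
  obtain ⟨n, hn, e, b, hee, hea, hae, hab, hba⟩ := hep a
  refine ⟨n, e, e*(b*e), hn, hee, hea, hae, ?_, ?_, ?_, ?_⟩
  · rw [← mul_assoc, hae, ← mul_assoc, hab, hee]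
  · calc (e*(b*e)) * pw a n = e*(b*(e*pw a n)) := by simp only [mul_assoc]
      _ = e*(b*pw a n) := by rw [hea]
      _ = e*e := by rw [hba]
      _ = e := hee
  · rw [← mul_assoc, hee]
  · simp only [mul_assoc]; rw [hee]

lemma pconj_symm {a b : S} (h : PConj a b) : PConj b a :=
  let ⟨x, y, h1, h2⟩ := h; ⟨y, x, h2, h1⟩

lemma sconj_symm {a b : S} (h : SConj a b) : SConj b a := by
  induction h with
  | single h => exact Relation.TransGen.single (pconj_symm h)
  | tail _ hstep ih => exact Relation.TransGen.head (pconj_symm hstep) ih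

lemma conn_of_sconj (hep : ∀ x : S, GroupBound x) {a b : S} (h : SConj a b) :
    ∀ {e w : S} {t : ℕ}, Good a e w t → ∀ {f v : S} {s : ℕ}, Good b f v s →
      Conn (a*e) (b*f) := by
  induction h with
  | single hp => intro e w t ha f v s hb; exact conn_of_pconj hp ha hb
  | tail _ hstep ih =>
    intro e w t ha f v s hb
    rename_i c _ _
    obtain ⟨t', e', w', hc⟩ := good_of_bound hep c
    exact conn_trans (ih ha hc) (conn_of_pconj hstep hc hb)

/-! #### a ∼ a·e -/

lemma sconj_refl (hreg : ∀ x : S, ∃ y : S, x = x * y * x) (a : S) : SConj a a := by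
  obtain ⟨p, hp⟩ := hreg a
  have s1 : PConj a (a*(a*p)) := ⟨a*p, a, hp, rfl⟩
  have s2 : PConj (a*(a*p)) a := ⟨a, a*p, rfl, hp⟩
  exact Relation.TransGen.head s1 (Relation.TransGen.single s2)

lemma key_sconj_ae (hreg : ∀ x : S, ∃ y : S, x = x * y * x) :
    ∀ t : ℕ, ∀ a e w : S, Good a e w t → SConj a (a*e) := by
  intro t
  induction t using Nat.strong_induction_on with
  | _ t IH =>
  intro a e w h
  obtain ⟨p, hp⟩ := hreg a
  rcases Nat.lt_or_ge t 2 with ht2 | ht2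
  · -- t = 1 : a*e = a
    have ht1 : t = 1 := by have := h.t_pos; omega
    subst ht1
    have hae : a * e = a := h.pw_e
    rw [hae]
    exact sconj_refl hreg a
  · -- t ≥ 2
    obtain ⟨t', rfl⟩ : ∃ t', t = t' + 1 := ⟨t - 1, by omega⟩
    have ht' : 1 ≤ t' := by omega
    have htp : 1 ≤ t' + 1 := by omega
    set b := a*(a*p) with hbdef
    -- helper : a * (p * (a * X)) = a * X
    have apeX : ∀ X : S, a*(p*(a*X)) = a*X := by
      intro X
      rw [← mul_assoc, ← mul_assoc, ← hp]
    -- pw of b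
    have pwb : ∀ {k : ℕ}, 1 ≤ k → pw b k = pw a (k+1) * p := by
      intro k
      induction k with
      | zero => omega
      | succ j ihj =>
        intro _
        rcases Nat.eq_zero_or_pos j with hj | hj
        · subst hj
          show b = pw a 2 * p
          rw [hbdef]
          show a*(a*p) = (a*a)*p
          rw [mul_assoc]
        · calc pw b (j+1) = pw b j * b := pw_succ b hj
            _ = (pw a (j+1) * p) * (a*(a*p)) := by rw [ihj hj, hbdef]
            _ = pw a (j+1) * (p*(a*(a*p))) := by simp only [mul_assoc]
            _ = pw a j * (a*(p*(a*(a*p)))) := by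
                rw [pw_succ a hj]; simp only [mul_assoc]
            _ = pw a j * (a*(a*p)) := by rw [apeX]
            _ = pw a (j+2) * p := by
                rw [pw_succ a (by omega : 1 ≤ j+1), pw_succ a hj]
                simp only [mul_assoc]
    have hg : pw b t' = pw a (t'+1) * p := pwb ht'
    -- helper : pw a (t'+1) * (p * (a * X)) = pw a (t'+1) * X
    have ApaX : ∀ X : S, pw a (t'+1) * (p*(a*X)) = pw a (t'+1) * X := by
      intro X
      calc pw a (t'+1) * (p*(a*X)) = pw a t' * (a*(p*(a*X))) := by
            rw [pw_succ a ht']; simp only [mul_assoc]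
        _ = pw a t' * (a*X) := by rw [apeX]
        _ = pw a (t'+1) * X := by rw [pw_succ a ht']; simp only [mul_assoc]
    -- p * e in expanded form
    have pe : p * e = p*(a*(pw a t' * w)) := by
      rw [← h.pw_w, pw_succ' a ht']
      simp only [mul_assoc]
    set ε := e*(a*p) with hedef
    -- ε is idempotent
    have heps : ε*ε = ε := by
      calc ε*ε = e*(a*((p*e)*(a*p))) := by rw [hedef]; simp only [mul_assoc]
        _ = e*(a*(p*(a*((pw a t' * w)*(a*p))))) := by
            rw [pe]; simp only [mul_assoc]
        _ = e*(a*((pw a t' * w)*(a*p))) := by rw [apeX]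
        _ = e*((a*(pw a t'))*(w*(a*p))) := by simp only [mul_assoc]
        _ = e*(pw a (t'+1)*(w*(a*p))) := by rw [← pw_succ' a ht']
        _ = (e*(pw a (t'+1)*w))*(a*p) := by simp only [mul_assoc]
        _ = (e*e)*(a*p) := by rw [h.pw_w]
        _ = e*(a*p) := by rw [h.idem]
    -- ε * g = g
    have hepsg : ε * pw b t' = pw b t' := by
      calc ε * pw b t' = e*((a*p)*(pw a (t'+1)*p)) := by
            rw [hg, hedef]; simp only [mul_assoc]
        _ = e*(a*(p*(a*(pw a t' * p)))) := by
            rw [pw_succ' a ht']; simp only [mul_assoc]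
        _ = e*(a*(pw a t' * p)) := by rw [apeX]
        _ = (e*pw a (t'+1))*p := by
            rw [pw_succ' a ht']; simp only [mul_assoc]
        _ = pw a (t'+1)*p := by rw [h.e_pw]
        _ = pw b t' := hg.symm
    -- g * ε = g
    have hgeps : pw b t' * ε = pw b t' := by
      calc pw b t' * ε = pw a (t'+1) * ((p*e)*(a*p)) := by
            rw [hg, hedef]; simp only [mul_assoc]
        _ = pw a (t'+1) * ((p*(a*(pw a t' * w)))*(a*p)) := by rw [pe]
        _ = pw a (t'+1) * (p*(a*((pw a t' * w)*(a*p)))) := by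
            simp only [mul_assoc]
        _ = pw a (t'+1) * ((pw a t' * w)*(a*p)) := by rw [ApaX]
        _ = ((pw a (t'+1) * pw a t')*w)*(a*p) := by simp only [mul_assoc]
        _ = ((pw a (t'+t'+1))*w)*(a*p) := by
            rw [← pw_add a htp ht', show t'+1+t' = t'+t'+1 by omega]
        _ = ((pw a t' * (pw a (t'+1)*w)))*(a*p) := by
            rw [show t'+t'+1 = t'+(t'+1) by omega, pw_add a ht' htp]
            simp only [mul_assoc]
        _ = (pw a t' * e)*(a*p) := by rw [h.pw_w]
        _ = pw a t' * ((e*a)*p) := by simp only [mul_assoc]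
        _ = pw a t' * ((a*e)*p) := by rw [h.e_comm]
        _ = (pw a (t'+1) * e)*p := by
            rw [pw_succ a ht']; simp only [mul_assoc]
        _ = pw a (t'+1)*p := by rw [h.pw_e]
        _ = pw b t' := hg.symm
    -- right inverse
    set c := pw a (t'+2)*(w*(w*(a*p))) with hcdef
    have hgc : pw b t' * c = ε := by
      calc pw b t' * c
          = pw a (t'+1) * (p*(a*(pw a (t'+1)*(w*(w*(a*p)))))) := by
            rw [hg, hcdef, pw_succ' a (by omega : 1 ≤ t'+1)]
            simp only [mul_assoc]
        _ = pw a (t'+1) * (pw a (t'+1)*(w*(w*(a*p)))) := by rw [ApaX]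
        _ = (pw a (t'+1) * (pw a (t'+1)*w))*(w*(a*p)) := by
            simp only [mul_assoc]
        _ = (pw a (t'+1) * e)*(w*(a*p)) := by rw [h.pw_w]
        _ = (pw a (t'+1) * w)*(a*p) := by rw [h.pw_e]; rw [← mul_assoc]
        _ = e*(a*p) := by rw [h.pw_w]
    -- left inverse
    set d := e*(a*(w*(w*pw a (t'+1)))) with hddef
    have hdg : d * pw b t' = ε := by
      calc d * pw b t'
          = e*(a*(w*((w*pw a (t'+1))*(pw a (t'+1)*p)))) := by
            rw [hg, hddef]; simp only [mul_assoc]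
        _ = e*(a*(w*(e*(pw a (t'+1)*p)))) := by rw [h.w_pw]
        _ = e*(a*(w*((e*pw a (t'+1))*p))) := by rw [← mul_assoc e _ p]
        _ = e*(a*(w*(pw a (t'+1)*p))) := by rw [h.e_pw]
        _ = e*(a*((w*pw a (t'+1))*p)) := by rw [← mul_assoc w _ p]
        _ = e*(a*(e*p)) := by rw [h.w_pw]
        _ = e*((a*e)*p) := by rw [← mul_assoc a e p]
        _ = e*((e*a)*p) := by rw [h.e_comm]
        _ = ((e*e)*a)*p := by simp only [mul_assoc]
        _ = (e*a)*p := by rw [h.idem]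
        _ = e*(a*p) := by rw [mul_assoc]
    -- normalized inverse
    set wb := ε*(c*ε) with hwbdef
    have hepswb : ε*wb = wb := by rw [hwbdef, ← mul_assoc, heps]
    have hwbeps : wb*ε = wb := by
      rw [hwbdef]; simp only [mul_assoc]; rw [heps]
    have hgwb : pw b t' * wb = ε := by
      calc pw b t' * wb = ((pw b t' * ε)*c)*ε := by
            rw [hwbdef]; simp only [mul_assoc]
        _ = (pw b t' * c)*ε := by rw [hgeps]
        _ = ε*ε := by rw [hgc]
        _ = ε := heps
    set l' := ε*(d*ε) with hldef
    have hl'g : l' * pw b t' = ε := by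
      calc l' * pw b t' = ε*(d*(ε*pw b t')) := by
            rw [hldef]; simp only [mul_assoc]
        _ = ε*(d*pw b t') := by rw [hepsg]
        _ = ε*ε := by rw [hdg]
        _ = ε := heps
    have hl'wb : l' = wb := by
      calc l' = l'*ε := by rw [hldef]; simp only [mul_assoc]; rw [heps]
        _ = l'*(pw b t' * wb) := by rw [hgwb]
        _ = (l'*pw b t') * wb := by rw [← mul_assoc]
        _ = ε*wb := by rw [hl'g]
        _ = wb := hepswb
    have hwbg : wb * pw b t' = ε := by rw [← hl'wb, hl'g]
    have hGoodb : Good b ε wb t' :=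
      ⟨ht', heps, hepsg, hgeps, hgwb, hwbg, hepswb, hwbeps⟩
    -- inductive hypothesis
    have ihb : SConj b (b*ε) := IH t' (by omega) b ε wb hGoodb
    -- primary step between the group parts
    obtain ⟨wb', hGoodb'⟩ := good_up hGoodb (by omega : t' ≤ t'+1)
    have hstep : PConj (a*e) (b*ε) :=
      pconj_step hp hbdef h hGoodb'
    -- assemble
    have h1 : PConj a b := ⟨a*p, a, hp, rfl⟩
    exact Relation.TransGen.head h1
      (ihb.trans (Relation.TransGen.single (pconj_symm hstep)))

/-! #### Good data from `HRel` -/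

lemma good_of_hrel {a e : S} {t : ℕ} (hta : 1 ≤ t) (he : e * e = e)
    (hH : HRel (pw a t) e) : ∃ w : S, Good a e w t := by
  obtain ⟨⟨⟨u₁, hu₁⟩, ⟨u₃, hu₃⟩⟩, ⟨⟨u₂, hu₂⟩, ⟨u₄, hu₄⟩⟩⟩ := hH
  set A : WithOne S := ((pw a t : S) : WithOne S) with hAdef
  set E : WithOne S := ((e : S) : WithOne S) with hEdef
  have hE : E * E = E := by
    rw [hEdef, ← WithOne.coe_mul, he]
  have hEA : E * A = A := by
    calc E * A = E * (E * u₄) := by rw [hu₄]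
      _ = (E*E) * u₄ := by rw [mul_assoc]
      _ = E * u₄ := by rw [hE]
      _ = A := hu₄
  have hAE : A * E = A := by
    calc A * E = (u₃ * E) * E := by rw [hu₃]
      _ = u₃ * (E*E) := by rw [mul_assoc]
      _ = u₃ * E := by rw [hE]
      _ = A := hu₃
  set W₁ : WithOne S := E*(u₁*E) with hW₁def
  set W₂ : WithOne S := E*(u₂*E) with hW₂def
  have hW₁A : W₁ * A = E := by
    calc W₁ * A = E*(u₁*(E*A)) := by rw [hW₁def]; simp only [mul_assoc]
      _ = E*(u₁*A) := by rw [hEA]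
      _ = E*E := by rw [hu₁]
      _ = E := hE
  have hAW₂ : A * W₂ = E := by
    calc A * W₂ = ((A*E)*u₂)*E := by rw [hW₂def]; simp only [mul_assoc]
      _ = (A*u₂)*E := by rw [hAE]
      _ = E*E := by rw [hu₂]
      _ = E := hE
  have hW₁E : W₁ * E = W₁ := by
    rw [hW₁def]; simp only [mul_assoc]; rw [hE]
  have hEW₂ : E * W₂ = W₂ := by rw [hW₂def, ← mul_assoc, hE]
  have hW₁W₂ : W₁ = W₂ := by
    calc W₁ = W₁ * E := hW₁E.symm
      _ = W₁ * (A * W₂) := by rw [hAW₂]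
      _ = (W₁ * A) * W₂ := by rw [← mul_assoc]
      _ = E * W₂ := by rw [hW₁A]
      _ = W₂ := hEW₂
  have hEW₁ : E * W₁ = W₁ := by rw [hW₁def, ← mul_assoc, hE]
  have hAW₁ : A * W₁ = E := by rw [hW₁W₂, hAW₂]
  -- W₁ = E*(u₁*E) is a coe
  have hcoe : ∃ w : S, W₁ = (w : WithOne S) := by
    rw [hW₁def, hEdef]
    refine WithOne.cases_on u₁ ?_ ?_
    · exact ⟨e*e, by rw [one_mul, ← WithOne.coe_mul]⟩
    · intro s
      exact ⟨e*(s*e), by rw [WithOne.coe_mul, WithOne.coe_mul]⟩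
  obtain ⟨w, hw⟩ := hcoe
  rw [hw] at hW₁A hAW₁ hEW₁ hW₁E
  refine ⟨w, hta, he, ?_, ?_, ?_, ?_, ?_, ?_⟩
  · exact WithOne.coe_inj.mp (by rw [WithOne.coe_mul]; exact hEA)
  · exact WithOne.coe_inj.mp (by rw [WithOne.coe_mul]; exact hAE)
  · exact WithOne.coe_inj.mp (by rw [WithOne.coe_mul]; exact hAW₁)
  · exact WithOne.coe_inj.mp (by rw [WithOne.coe_mul]; exact hW₁A)
  · exact WithOne.coe_inj.mp (by rw [WithOne.coe_mul]; exact hEW₁)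
  · exact WithOne.coe_inj.mp (by rw [WithOne.coe_mul]; exact hW₁E)

end EpiAux

end EpigroupAux

open EpiAux in
theorem sconj_iff_mutually_inverse_regular_epigroup
    (hreg : ∀ x : S, ∃ y : S, x = x * y * x)
    (hep : ∀ x : S, GroupBound x)
    (a b ea eb : S) (ta tb : ℕ) (hta : 1 ≤ ta) (htb : 1 ≤ tb)
    (hea : ea * ea = ea) (hHa : HRel (pw a ta) ea)
    (heb : eb * eb = eb) (hHb : HRel (pw b tb) eb) :
    SConj a b ↔ ∃ u v : S, u = u * v * u ∧ v = v * u * v ∧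
      a * ea = u * (b * eb) * v ∧ b * eb = v * (a * ea) * u := by
  obtain ⟨wa, hGa⟩ := good_of_hrel hta hea hHa
  obtain ⟨wb, hGb⟩ := good_of_hrel htb heb hHb
  constructor
  · intro h
    have hconn : Conn (a*ea) (b*eb) := conn_of_sconj hep h hGa hGb
    obtain ⟨e', gi, f', hi, u, v, hGg, hGh, hg, hh, huv, hvu, heu, huf, hfv, hve⟩ := hconn
    refine ⟨u, v, ?_, ?_, ?_, ?_⟩
    · rw [huv, heu]
    · rw [hvu, hfv]
    · rw [hg]; simp only [mul_assoc]
    · rw [hh]; simp only [mul_assoc]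
  · rintro ⟨u, v, hu, hv, h1, h2⟩
    have hc : b*eb = (v*u)*((b*eb)*(v*u)) := by
      calc b*eb = v*(a*ea)*u := h2
        _ = v*((u*(b*eb)*v))*u := by rw [← h1]
        _ = (v*u)*((b*eb)*(v*u)) := by simp only [mul_assoc]
    have hidem : (v*u)*(v*u) = v*u := by
      rw [← mul_assoc, ← hv]
    have hcvu : (b*eb)*(v*u) = b*eb := by
      calc (b*eb)*(v*u) = ((v*u)*((b*eb)*(v*u)))*(v*u) := by rw [← hc]
        _ = (v*u)*((b*eb)*((v*u)*(v*u))) := by simp only [mul_assoc]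
        _ = (v*u)*((b*eb)*(v*u)) := by rw [hidem]
        _ = b*eb := hc.symm
    have hmid : PConj (a*ea) (b*eb) := by
      refine ⟨u, (b*eb)*v, by rw [h1, mul_assoc], ?_⟩
      rw [mul_assoc, hcvu]
    have hka : SConj a (a*ea) := key_sconj_ae hreg ta a ea wa hGa
    have hkb : SConj b (b*eb) := key_sconj_ae hreg tb b eb wb hGb
    exact (hka.trans (Relation.TransGen.single hmid)).trans (sconj_symm hkb)
end

section
/- Let S be a factorizable inverse epigroup with identity e and group of units G. Then for a, b ∈ S, a ∼ b if and only if a·e_a and b·e_b are G-conjugate, i.e., a·e_a = g⁻¹·(b·e_b)·g for some g ∈ G. -/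
variable {S : Type*} [Semigroup S]

section Aux

variable {M : Type*} [Monoid M]

theorem pw_eq_pow (a : M) : ∀ {n : ℕ}, 1 ≤ n → pw a n = a ^ n
  | 1, _ => by simp [pw]
  | (n+2), _ => by
      rw [show pw a (n+2) = pw a (n+1) * a from rfl, pw_eq_pow a (Nat.le_add_left 1 n),
        ← pow_succ]

/-- Bundled hypotheses: `M` is an inverse monoid with inversion `inv`. -/
structure FIHyp (M : Type*) [Monoid M] (inv : M → M) : Prop where
  ax : ∀ x : M, x * inv x * x = x ∧ inv x * x * inv x = inv x
  ic : ∀ e f : M, e * e = e → f * f = f → e * f = f * e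

variable {inv : M → M}

theorem FIHyp.a1 (H : FIHyp M inv) (x : M) : x * inv x * x = x := (H.ax x).1
theorem FIHyp.a2 (H : FIHyp M inv) (x : M) : inv x * x * inv x = inv x := (H.ax x).2
theorem FIHyp.idemR (H : FIHyp M inv) (x : M) : (x * inv x) * (x * inv x) = x * inv x := by
  calc (x * inv x) * (x * inv x) = (x * inv x * x) * inv x := by simp only [mul_assoc]
  _ = x * inv x := by rw [H.a1]
theorem FIHyp.idemL (H : FIHyp M inv) (x : M) : (inv x * x) * (inv x * x) = inv x * x := by
  calc (inv x * x) * (inv x * x) = (inv x * x * inv x) * x := by simp only [mul_assoc]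
  _ = inv x * x := by rw [H.a2]

theorem FIHyp.inv_uniq (H : FIHyp M inv) {x y : M} (h1 : x * y * x = x) (h2 : y * x * y = y) :
    inv x = y := by
  have ixy : (x * y) * (x * y) = x * y := by
    calc (x * y) * (x * y) = (x * y * x) * y := by simp only [mul_assoc]
    _ = x * y := by rw [h1]
  have iyx : (y * x) * (y * x) = y * x := by
    calc (y * x) * (y * x) = (y * x * y) * x := by simp only [mul_assoc]
    _ = y * x := by rw [h2]
  have ixi := H.idemR x
  have iix := H.idemL x
  have s1 : y = y * (x * inv x) := by
    calc y = y * x * y := h2.symm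
    _ = (y * ((x * inv x) * (x * y))) := by
          rw [show (x * inv x) * (x * y) = (x * inv x * x) * y by simp only [mul_assoc],
            H.a1, ← mul_assoc]
    _ = y * ((x * y) * (x * inv x)) := by rw [H.ic _ _ ixi ixy]
    _ = (y * x * y) * (x * inv x) := by simp only [mul_assoc]
    _ = y * (x * inv x) := by rw [h2]
  have s2 : y * (x * inv x) = inv x := by
    calc y * (x * inv x) = ((y * x) * (inv x * x)) * inv x := by
          rw [show ((y * x) * (inv x * x)) * inv x = y * ((x * inv x * x) * inv x) by
            simp only [mul_assoc], H.a1]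
    _ = ((inv x * x) * (y * x)) * inv x := by rw [H.ic _ _ iyx iix]
    _ = inv x * ((x * y * x) * inv x) := by simp only [mul_assoc]
    _ = inv x * (x * inv x) := by rw [h1]
    _ = inv x := by rw [← mul_assoc, H.a2]
  rw [s1, s2]

theorem FIHyp.inv_idem (H : FIHyp M inv) {e : M} (he : e * e = e) : inv e = e :=
  H.inv_uniq (by rw [he, he]) (by rw [he, he])

theorem FIHyp.inv_mul (H : FIHyp M inv) (x y : M) : inv (x * y) = inv y * inv x := by
  have c1 : (x * y) * (inv y * inv x) * (x * y) = x * y := by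
    calc (x * y) * (inv y * inv x) * (x * y)
        = x * (((y * inv y) * (inv x * x)) * y) := by simp only [mul_assoc]
      _ = x * (((inv x * x) * (y * inv y)) * y) := by rw [H.ic _ _ (H.idemR y) (H.idemL x)]
      _ = (x * inv x * x) * (y * inv y * y) := by simp only [mul_assoc]
      _ = x * y := by rw [H.a1, H.a1]
  have c2 : (inv y * inv x) * (x * y) * (inv y * inv x) = inv y * inv x := by
    calc (inv y * inv x) * (x * y) * (inv y * inv x)
        = inv y * (((inv x * x) * (y * inv y)) * inv x) := by simp only [mul_assoc]
      _ = inv y * (((y * inv y) * (inv x * x)) * inv x) := by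
            rw [H.ic _ _ (H.idemL x) (H.idemR y)]
      _ = (inv y * y * inv y) * (inv x * x * inv x) := by simp only [mul_assoc]
      _ = inv y * inv x := by rw [H.a2, H.a2]
  exact H.inv_uniq c1 c2

/-- push an idempotent through: `x * e = (x * e * inv x) * x`. -/
theorem FIHyp.push (H : FIHyp M inv) {e : M} (he : e * e = e) (x : M) :
    (x * e * inv x) * x = x * e := by
  calc (x * e * inv x) * x = x * (e * (inv x * x)) := by simp only [mul_assoc]
  _ = x * ((inv x * x) * e) := by rw [H.ic _ _ he (H.idemL x)]
  _ = (x * inv x * x) * e := by simp only [mul_assoc]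
  _ = x * e := by rw [H.a1]

theorem FIHyp.f_succ (H : FIHyp M inv) (a : M) (n : ℕ) :
    a ^ (n+1) * inv (a ^ (n+1)) = a * (a ^ n * inv (a ^ n)) * inv a := by
  have h1 : a ^ (n+1) = a * a ^ n := pow_succ' a n
  rw [h1, H.inv_mul]
  simp only [mul_assoc]

theorem FIHyp.f_succ' (H : FIHyp M inv) (a : M) (n : ℕ) :
    a ^ (n+1) * inv (a ^ (n+1)) = a ^ (n+1) * (inv a * inv (a ^ n)) := by
  conv_lhs => rw [show a ^ (n+1) * inv (a^(n+1)) = a^(n+1) * inv (a^n * a) by rw [← pow_succ]]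
  rw [H.inv_mul]

theorem FIHyp.fsucc_absorb (H : FIHyp M inv) (a : M) (n : ℕ) :
    (a ^ (n+1) * inv (a ^ (n+1))) * (a ^ n * inv (a ^ n)) = a ^ (n+1) * inv (a ^ (n+1)) := by
  calc (a^(n+1) * inv (a^(n+1))) * (a^n * inv (a^n))
      = (a^(n+1) * (inv a * inv (a^n))) * (a^n * inv (a^n)) := by rw [H.f_succ' a n]
    _ = a^(n+1) * (inv a * (inv (a^n) * a^n * inv (a^n))) := by simp only [mul_assoc]
    _ = a^(n+1) * (inv a * inv (a^n)) := by rw [H.a2]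
    _ = a^(n+1) * inv (a^(n+1)) := (H.f_succ' a n).symm

/-- The conjugation chain: `a ∼ a * (aⁿ * inv aⁿ)` for all `n ≥ 1`. -/
theorem FIHyp.chain (H : FIHyp M inv) (a : M) :
    ∀ n : ℕ, 1 ≤ n → SConj a (a * (a ^ n * inv (a ^ n))) := by
  intro n hn
  induction n, hn using Nat.le_induction with
  | base =>
    refine Relation.TransGen.single ⟨a * inv a, a, (H.a1 a).symm, ?_⟩
    rw [pow_one]
  | succ n hn ih =>
    refine ih.tail ⟨a ^ (n+1) * inv (a ^ (n+1)), a * (a ^ n * inv (a ^ n)), ?_, ?_⟩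
    · -- a * Fn = F(n+1) * (a * Fn)
      have key1 : (a ^ (n+1) * inv (a ^ (n+1))) * a = a * (a ^ n * inv (a ^ n)) := by
        rw [H.f_succ a n]
        exact H.push (H.idemR (a ^ n)) a
      calc a * (a ^ n * inv (a ^ n))
          = a * ((a ^ n * inv (a ^ n)) * (a ^ n * inv (a ^ n))) := by rw [H.idemR]
        _ = (a * (a ^ n * inv (a ^ n))) * (a ^ n * inv (a ^ n)) := by simp only [mul_assoc]
        _ = ((a ^ (n+1) * inv (a ^ (n+1))) * a) * (a ^ n * inv (a ^ n)) := by rw [key1]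
        _ = (a ^ (n+1) * inv (a ^ (n+1))) * (a * (a ^ n * inv (a ^ n))) := by
              simp only [mul_assoc]
    · -- a * F(n+1) = (a * Fn) * F(n+1)
      have key2 : (a ^ n * inv (a ^ n)) * (a ^ (n+1) * inv (a ^ (n+1)))
          = a ^ (n+1) * inv (a ^ (n+1)) := by
        rw [H.ic _ _ (H.idemR (a ^ n)) (H.idemR (a ^ (n+1)))]
        exact H.fsucc_absorb a n
      calc a * (a ^ (n+1) * inv (a ^ (n+1)))
          = a * ((a ^ n * inv (a ^ n)) * (a ^ (n+1) * inv (a ^ (n+1)))) := by rw [key2]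
        _ = (a * (a ^ n * inv (a ^ n))) * (a ^ (n+1) * inv (a ^ (n+1))) := by
              simp only [mul_assoc]

theorem withone_right {u v : M} (w : WithOne M) (h : (u : WithOne M) * w = (v : WithOne M)) :
    u = v ∨ ∃ s : M, u * s = v := by
  revert h
  induction w using WithOne.recOneCoe with
  | one => intro h; left; rw [mul_one] at h; exact WithOne.coe_inj.mp h
  | coe s => intro h; right; exact ⟨s, WithOne.coe_inj.mp (by rw [WithOne.coe_mul]; exact h)⟩

theorem withone_left {u v : M} (w : WithOne M) (h : w * (u : WithOne M) = (v : WithOne M)) :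
    u = v ∨ ∃ s : M, s * u = v := by
  revert h
  induction w using WithOne.recOneCoe with
  | one => intro h; left; rw [one_mul] at h; exact WithOne.coe_inj.mp h
  | coe s => intro h; right; exact ⟨s, WithOne.coe_inj.mp (by rw [WithOne.coe_mul]; exact h)⟩

theorem FIHyp.rrel_fl (H : FIHyp M inv) {u v : M} (h : RRel u v) :
    u * inv u = v * inv v := by
  obtain ⟨⟨w1, h1⟩, ⟨w2, h2⟩⟩ := h
  rcases withone_right w1 h1 with h | ⟨s, hs⟩
  · rw [h]
  rcases withone_right w2 h2 with h | ⟨r, hr⟩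
  · rw [h]
  have k1 : (u * inv u) * (v * inv v) = v * inv v := by
    calc (u * inv u) * (v * inv v) = (u * inv u) * ((u*s) * inv (u*s)) := by rw [hs]
      _ = (u * inv u) * ((u*s) * (inv s * inv u)) := by rw [H.inv_mul]
      _ = (u * inv u * u) * (s * (inv s * inv u)) := by simp only [mul_assoc]
      _ = u * (s * (inv s * inv u)) := by rw [H.a1]
      _ = (u * s) * (inv s * inv u) := by simp only [mul_assoc]
      _ = (u * s) * inv (u * s) := by rw [H.inv_mul]
      _ = v * inv v := by rw [hs]
  have k2 : (v * inv v) * (u * inv u) = u * inv u := by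
    calc (v * inv v) * (u * inv u) = (v * inv v) * ((v*r) * inv (v*r)) := by rw [hr]
      _ = (v * inv v) * ((v*r) * (inv r * inv v)) := by rw [H.inv_mul]
      _ = (v * inv v * v) * (r * (inv r * inv v)) := by simp only [mul_assoc]
      _ = v * (r * (inv r * inv v)) := by rw [H.a1]
      _ = (v * r) * (inv r * inv v) := by simp only [mul_assoc]
      _ = (v * r) * inv (v * r) := by rw [H.inv_mul]
      _ = u * inv u := by rw [hr]
  calc u * inv u = (v * inv v) * (u * inv u) := k2.symm
    _ = (u * inv u) * (v * inv v) := (H.ic _ _ (H.idemR u) (H.idemR v)).symm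
    _ = v * inv v := k1

theorem FIHyp.lrel_fl (H : FIHyp M inv) {u v : M} (h : LRel u v) :
    inv u * u = inv v * v := by
  obtain ⟨⟨w1, h1⟩, ⟨w2, h2⟩⟩ := h
  rcases withone_left w1 h1 with h | ⟨s, hs⟩
  · rw [h]
  rcases withone_left w2 h2 with h | ⟨r, hr⟩
  · rw [h]
  have k1 : (inv u * u) * (inv v * v) = inv v * v := by
    calc (inv u * u) * (inv v * v) = (inv u * u) * (inv (s*u) * (s*u)) := by rw [hs]
      _ = (inv u * u) * ((inv u * inv s) * (s*u)) := by rw [H.inv_mul]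
      _ = (inv u * u * inv u) * (inv s * (s * u)) := by simp only [mul_assoc]
      _ = inv u * (inv s * (s * u)) := by rw [H.a2]
      _ = (inv u * inv s) * (s * u) := by simp only [mul_assoc]
      _ = inv (s * u) * (s * u) := by rw [H.inv_mul]
      _ = inv v * v := by rw [hs]
  have k2 : (inv v * v) * (inv u * u) = inv u * u := by
    calc (inv v * v) * (inv u * u) = (inv v * v) * (inv (r*v) * (r*v)) := by rw [hr]
      _ = (inv v * v) * ((inv v * inv r) * (r*v)) := by rw [H.inv_mul]
      _ = (inv v * v * inv v) * (inv r * (r * v)) := by simp only [mul_assoc]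
      _ = inv v * (inv r * (r * v)) := by rw [H.a2]
      _ = (inv v * inv r) * (r * v) := by simp only [mul_assoc]
      _ = inv (r * v) * (r * v) := by rw [H.inv_mul]
      _ = inv u * u := by rw [hr]
  calc inv u * u = (inv v * v) * (inv u * u) := k2.symm
    _ = (inv u * u) * (inv v * v) := (H.ic _ _ (H.idemL u) (H.idemL v)).symm
    _ = inv v * v := k1

theorem FIHyp.ge_fl (H : FIHyp M inv) {u : M} (h : IsGroupElement u) :
    u * inv u = inv u * u := by
  obtain ⟨e, w, he, h1, h2, h3, h4⟩ := h
  have hi : inv u = e * w * e := by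
    refine H.inv_uniq ?_ ?_
    · calc u * (e * w * e) * u = ((u * e) * w) * (e * u) := by simp only [mul_assoc]
        _ = (u * w) * u := by rw [h2, h1]
        _ = e * u := by rw [h3]
        _ = u := h1
    · calc (e * w * e) * u * (e * w * e) = e * w * ((e * u) * (e * w * e)) := by
            simp only [mul_assoc]
        _ = e * w * (u * (e * w * e)) := by rw [h1]
        _ = e * w * ((u * e) * (w * e)) := by simp only [mul_assoc]
        _ = e * w * (u * (w * e)) := by rw [h2]
        _ = e * ((w * u) * (w * e)) := by simp only [mul_assoc]
        _ = e * (e * (w * e)) := by rw [h4]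
        _ = (e * e) * (w * e) := by simp only [mul_assoc]
        _ = e * (w * e) := by rw [he]
        _ = e * w * e := by simp only [mul_assoc]
  have r1 : u * inv u = e := by
    rw [hi]
    calc u * (e * w * e) = ((u * e) * w) * e := by simp only [mul_assoc]
      _ = (u * w) * e := by rw [h2]
      _ = e * e := by rw [h3]
      _ = e := he
  have r2 : inv u * u = e := by
    rw [hi]
    calc (e * w * e) * u = (e * w) * (e * u) := by simp only [mul_assoc]
      _ = (e * w) * u := by rw [h1]
      _ = e * (w * u) := by simp only [mul_assoc]
      _ = e * e := by rw [h4]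
      _ = e := he
  rw [r1, r2]

theorem FIHyp.stab' (H : FIHyp M inv) (a : M) (k : ℕ)
    (hg : a ^ (k+1) * inv (a ^ (k+1)) = inv (a ^ (k+1)) * a ^ (k+1)) :
    (a ^ (k+1+1) * inv (a ^ (k+1+1)) = inv (a ^ (k+1+1)) * a ^ (k+1+1)) ∧
    (a ^ (k+1+1) * inv (a ^ (k+1+1)) = a ^ (k+1) * inv (a ^ (k+1))) ∧
    (a * (a ^ (k+1) * inv (a ^ (k+1))) = (a ^ (k+1) * inv (a ^ (k+1))) * a) := by
  have p_an : a * inv a * a ^ (k+1) = a ^ (k+1) := by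
    calc a * inv a * a ^ (k+1) = a * inv a * (a * a ^ k) := by rw [pow_succ']
      _ = (a * inv a * a) * a ^ k := by simp only [mul_assoc]
      _ = a * a ^ k := by rw [H.a1]
      _ = a ^ (k+1) := (pow_succ' a k).symm
  have inv1 : inv (a ^ (k+1+1)) = inv a * inv (a ^ (k+1)) := by
    rw [show a ^ (k+1+1) = a ^ (k+1) * a from pow_succ a (k+1), H.inv_mul]
  have F1 : a ^ (k+1+1) * inv (a ^ (k+1+1)) = a ^ (k+1) * (a * inv a) * inv (a ^ (k+1)) := by
    rw [inv1, show a ^ (k+1+1) = a ^ (k+1) * a from pow_succ a (k+1)]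
    simp only [mul_assoc]
  have c2 : (a ^ (k+1+1) * inv (a ^ (k+1+1))) * (a ^ (k+1) * inv (a ^ (k+1)))
      = a ^ (k+1) * inv (a ^ (k+1)) := by
    calc (a ^ (k+1+1) * inv (a ^ (k+1+1))) * (a ^ (k+1) * inv (a ^ (k+1)))
        = (a ^ (k+1) * (a * inv a) * inv (a ^ (k+1))) * (a ^ (k+1) * inv (a ^ (k+1))) := by
          rw [F1]
      _ = a ^ (k+1) * ((a * inv a) * ((inv (a ^ (k+1)) * a ^ (k+1)) * inv (a ^ (k+1)))) := by
          simp only [mul_assoc]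
      _ = a ^ (k+1) * ((a * inv a) * ((a ^ (k+1) * inv (a ^ (k+1))) * inv (a ^ (k+1)))) := by
          rw [← hg]
      _ = a ^ (k+1) * (((a * inv a * a ^ (k+1)) * inv (a ^ (k+1))) * inv (a ^ (k+1))) := by
          simp only [mul_assoc]
      _ = a ^ (k+1) * ((a ^ (k+1) * inv (a ^ (k+1))) * inv (a ^ (k+1))) := by rw [p_an]
      _ = a ^ (k+1) * ((inv (a ^ (k+1)) * a ^ (k+1)) * inv (a ^ (k+1))) := by rw [hg]
      _ = (a ^ (k+1) * inv (a ^ (k+1))) * (a ^ (k+1) * inv (a ^ (k+1))) := by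
          simp only [mul_assoc]
      _ = a ^ (k+1) * inv (a ^ (k+1)) := H.idemR _
  have eqF : a ^ (k+1+1) * inv (a ^ (k+1+1)) = a ^ (k+1) * inv (a ^ (k+1)) :=
    (H.fsucc_absorb a (k+1)).symm.trans c2
  have comm : a * (a ^ (k+1) * inv (a ^ (k+1))) = (a ^ (k+1) * inv (a ^ (k+1))) * a := by
    calc a * (a ^ (k+1) * inv (a ^ (k+1)))
        = (a * (a ^ (k+1) * inv (a ^ (k+1))) * inv a) * a :=
          (H.push (H.idemR (a ^ (k+1))) a).symm
      _ = (a ^ (k+1+1) * inv (a ^ (k+1+1))) * a := by rw [← H.f_succ a (k+1)]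
      _ = (a ^ (k+1) * inv (a ^ (k+1))) * a := by rw [eqF]
  have an_ia : a ^ (k+1) * (inv a * a) = a ^ (k+1) := by
    calc a ^ (k+1) * (inv a * a) = (a ^ k * a) * (inv a * a) := by rw [pow_succ]
      _ = a ^ k * (a * inv a * a) := by simp only [mul_assoc]
      _ = a ^ k * a := by rw [H.a1]
      _ = a ^ (k+1) := (pow_succ a k).symm
  have e_le : (a ^ (k+1) * inv (a ^ (k+1))) * (inv a * a) = a ^ (k+1) * inv (a ^ (k+1)) := by
    calc (a ^ (k+1) * inv (a ^ (k+1))) * (inv a * a)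
        = (inv (a ^ (k+1)) * a ^ (k+1)) * (inv a * a) := by rw [hg]
      _ = inv (a ^ (k+1)) * (a ^ (k+1) * (inv a * a)) := by simp only [mul_assoc]
      _ = inv (a ^ (k+1)) * a ^ (k+1) := by rw [an_ia]
      _ = a ^ (k+1) * inv (a ^ (k+1)) := hg.symm
  have e_le' : (inv a * a) * (a ^ (k+1) * inv (a ^ (k+1))) = a ^ (k+1) * inv (a ^ (k+1)) := by
    rw [← H.ic _ _ (H.idemR (a ^ (k+1))) (H.idemL a)]
    exact e_le
  have claimL : inv (a ^ (k+1+1)) * a ^ (k+1+1) = a ^ (k+1) * inv (a ^ (k+1)) := by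
    calc inv (a ^ (k+1+1)) * a ^ (k+1+1)
        = (inv a * inv (a ^ (k+1))) * (a ^ (k+1) * a) := by
          rw [inv1, show a ^ (k+1+1) = a ^ (k+1) * a from pow_succ a (k+1)]
      _ = inv a * ((inv (a ^ (k+1)) * a ^ (k+1)) * a) := by simp only [mul_assoc]
      _ = inv a * ((a ^ (k+1) * inv (a ^ (k+1))) * a) := by rw [← hg]
      _ = inv a * (a * (a ^ (k+1) * inv (a ^ (k+1)))) := by rw [← comm]
      _ = (inv a * a) * (a ^ (k+1) * inv (a ^ (k+1))) := by simp only [mul_assoc]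
      _ = a ^ (k+1) * inv (a ^ (k+1)) := e_le'
  exact ⟨eqF.trans claimL.symm, eqF, comm⟩

theorem FIHyp.stab (H : FIHyp M inv) (a : M) {n : ℕ} (hn : 1 ≤ n)
    (hg : a ^ n * inv (a ^ n) = inv (a ^ n) * a ^ n) :
    (a ^ (n+1) * inv (a ^ (n+1)) = inv (a ^ (n+1)) * a ^ (n+1)) ∧
    (a ^ (n+1) * inv (a ^ (n+1)) = a ^ n * inv (a ^ n)) ∧
    (a * (a ^ n * inv (a ^ n)) = (a ^ n * inv (a ^ n)) * a) := by
  obtain ⟨k, rfl⟩ : ∃ k, n = k + 1 := ⟨n - 1, by omega⟩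
  exact H.stab' a k hg

theorem FIHyp.good_mono (H : FIHyp M inv) (a : M) {n : ℕ} (hn : 1 ≤ n)
    (hg : a ^ n * inv (a ^ n) = inv (a ^ n) * a ^ n) :
    ∀ m, n ≤ m → (a ^ m * inv (a ^ m) = inv (a ^ m) * a ^ m ∧
      a ^ m * inv (a ^ m) = a ^ n * inv (a ^ n)) := by
  intro m hm
  induction m, hm using Nat.le_induction with
  | base => exact ⟨hg, rfl⟩
  | succ m hm ih =>
    obtain ⟨g1, g2, _⟩ := H.stab a (hn.trans hm) ih.1
    exact ⟨g1, g2.trans ih.2⟩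

theorem FIHyp.wd (H : FIHyp M inv) (a : M) {n m : ℕ} (hn : 1 ≤ n) (hm : 1 ≤ m)
    (hgn : a ^ n * inv (a ^ n) = inv (a ^ n) * a ^ n)
    (hgm : a ^ m * inv (a ^ m) = inv (a ^ m) * a ^ m) :
    a ^ n * inv (a ^ n) = a ^ m * inv (a ^ m) := by
  have h1 := (H.good_mono a hn hgn (max n m) (le_max_left n m)).2
  have h2 := (H.good_mono a hm hgm (max n m) (le_max_right n m)).2
  exact h1.symm.trans h2

theorem shift_pow (x y : M) : ∀ k : ℕ, (x*y)^k * x = x * (y*x)^k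
  | 0 => by simp
  | (k+1) => by
    calc (x*y)^(k+1) * x = (x*y) * ((x*y)^k * x) := by rw [pow_succ']; simp only [mul_assoc]
      _ = (x*y) * (x * (y*x)^k) := by rw [shift_pow x y k]
      _ = x * ((y*x) * (y*x)^k) := by simp only [mul_assoc]
      _ = x * (y*x)^(k+1) := by rw [← pow_succ']

theorem pow_mid (x y : M) (k : ℕ) : (x*y)^(k+1) = (x * (y*x)^k) * y := by
  calc (x*y)^(k+1) = (x*y)^k * (x*y) := pow_succ _ _
    _ = ((x*y)^k * x) * y := by simp only [mul_assoc]
    _ = (x * (y*x)^k) * y := by rw [shift_pow]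

theorem FIHyp.core (H : FIHyp M inv)
    (hfact : ∀ s : M, ∃ g : Mˣ, s * inv s = s * (↑g⁻¹ : M))
    (a b m y P Q : M)
    (hP : P = m * y) (hQ : Q = y * m)
    (hgP : P * inv P = inv P * P) (hgQ : Q * inv Q = inv Q * Q)
    (hya : y * a = b * y)
    (hcomm : a * (P * inv P) = (P * inv P) * a) :
    ∃ g : Mˣ, a * (P * inv P) = (↑g⁻¹ : M) * (b * (Q * inv Q)) * (↑g : M) := by
  obtain ⟨e, he_def⟩ : ∃ e, e = P * inv P := ⟨_, rfl⟩
  obtain ⟨f, hf_def⟩ : ∃ f, f = Q * inv Q := ⟨_, rfl⟩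
  rw [← he_def, ← hf_def]
  rw [← he_def] at hcomm
  have hc : inv P = inv y * inv m := by rw [hP, H.inv_mul]
  have hd : inv Q = inv m * inv y := by rw [hQ, H.inv_mul]
  have he : e * e = e := by rw [he_def]; exact H.idemR P
  have hf : f * f = f := by rw [hf_def]; exact H.idemR Q
  have heL : e = inv P * P := by rw [he_def, hgP]
  have hfL : f = inv Q * Q := by rw [hf_def, hgQ]
  have E1 : e * (inv y * y) = e := by
    rw [heL, hc, hP]
    calc ((inv y * inv m) * (m * y)) * (inv y * y)
        = (inv y * inv m) * (m * (y * inv y * y)) := by simp only [mul_assoc]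
      _ = (inv y * inv m) * (m * y) := by rw [H.a1]
  have E2 : (e * inv y) * (y * e) = e := by
    calc (e * inv y) * (y * e) = (e * (inv y * y)) * e := by simp only [mul_assoc]
      _ = e * e := by rw [E1]
      _ = e := he
  have hyP : y * P = Q * y := by rw [hP, hQ]; simp only [mul_assoc]
  have E3 : y * e = Q * (y * inv P) := by
    calc y * e = (y * P) * inv P := by rw [he_def]; simp only [mul_assoc]
      _ = (Q * y) * inv P := by rw [hyP]
      _ = Q * (y * inv P) := by simp only [mul_assoc]
  have fQ : f * Q = Q := by rw [hf_def]; exact H.a1 Q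
  have E4 : f * (y * e) = y * e := by
    calc f * (y * e) = f * (Q * (y * inv P)) := by rw [E3]
      _ = (f * Q) * (y * inv P) := by simp only [mul_assoc]
      _ = Q * (y * inv P) := by rw [fQ]
      _ = y * e := E3.symm
  have E5 : (y * e) * inv y = (y * inv y) * (inv m * m) := by
    rw [heL, hc, hP]
    calc (y * ((inv y * inv m) * (m * y))) * inv y
        = (y * inv y) * ((inv m * m) * (y * inv y)) := by simp only [mul_assoc]
      _ = (y * inv y) * ((y * inv y) * (inv m * m)) := by
          rw [H.ic _ _ (H.idemL m) (H.idemR y)]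
      _ = ((y * inv y) * (y * inv y)) * (inv m * m) := by simp only [mul_assoc]
      _ = (y * inv y) * (inv m * m) := by rw [H.idemR y]
  have E6 : ((y * inv y) * (inv m * m)) * ((y * inv y) * (inv m * m))
      = (y * inv y) * (inv m * m) := by
    calc ((y * inv y) * (inv m * m)) * ((y * inv y) * (inv m * m))
        = (y * inv y) * (((inv m * m) * (y * inv y)) * (inv m * m)) := by
          simp only [mul_assoc]
      _ = (y * inv y) * (((y * inv y) * (inv m * m)) * (inv m * m)) := by
          rw [H.ic _ _ (H.idemL m) (H.idemR y)]
      _ = ((y * inv y) * (y * inv y)) * ((inv m * m) * (inv m * m)) := by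
          simp only [mul_assoc]
      _ = (y * inv y) * (inv m * m) := by rw [H.idemR y, H.idemL m]
  have hfL2 : f = (inv m * (inv y * y)) * m := by rw [hfL, hd, hQ]; simp only [mul_assoc]
  have E7 : (inv m * m) * f = f := by
    rw [hfL2]
    calc (inv m * m) * ((inv m * (inv y * y)) * m)
        = inv m * (((m * inv m) * (inv y * y)) * m) := by simp only [mul_assoc]
      _ = inv m * (((inv y * y) * (m * inv m)) * m) := by
          rw [H.ic _ _ (H.idemR m) (H.idemL y)]
      _ = (inv m * (inv y * y)) * (m * inv m * m) := by simp only [mul_assoc]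
      _ = (inv m * (inv y * y)) * m := by rw [H.a1]
  have hfR2 : f = (y * m) * (inv m * inv y) := by rw [hf_def, hd, hQ]
  have E8 : (y * inv y) * f = f := by
    rw [hfR2]
    calc (y * inv y) * ((y * m) * (inv m * inv y))
        = ((y * inv y * y) * m) * (inv m * inv y) := by simp only [mul_assoc]
      _ = (y * m) * (inv m * inv y) := by rw [H.a1]
  have E9 : ((y * inv y) * (inv m * m)) * f = f := by
    calc ((y * inv y) * (inv m * m)) * f = (y * inv y) * ((inv m * m) * f) := by
          simp only [mul_assoc]
      _ = (y * inv y) * f := by rw [E7]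
      _ = f := E8
  have E10 : f * ((y * e) * inv y) = (y * e) * inv y := by
    calc f * ((y * e) * inv y) = (f * (y * e)) * inv y := by simp only [mul_assoc]
      _ = (y * e) * inv y := by rw [E4]
  have E11 : (y * e) * inv y = f := by
    have hpf : ((y * e) * inv y) * f = f := by rw [E5]; exact E9
    have hpi : ((y * e) * inv y) * ((y * e) * inv y) = (y * e) * inv y := by
      rw [E5]; exact E6
    calc (y * e) * inv y = f * ((y * e) * inv y) := E10.symm
      _ = ((y * e) * inv y) * f := (H.ic _ _ hpi hf).symm
      _ = f := hpf
  have hit : inv (y * e) = e * inv y := by rw [H.inv_mul, H.inv_idem he]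
  have E12 : (y * e) * inv (y * e) = f := by
    rw [hit]
    calc (y * e) * (e * inv y) = (y * (e * e)) * inv y := by simp only [mul_assoc]
      _ = (y * e) * inv y := by rw [he]
      _ = f := E11
  have E2' : inv (y * e) * (y * e) = e := by rw [hit]; exact E2
  have E14 : (y * e) * (a * e) * inv (y * e) = b * f := by
    rw [hit]
    calc (y * e) * (a * e) * (e * inv y)
        = y * ((e * a) * ((e * e) * inv y)) := by simp only [mul_assoc]
      _ = y * ((e * a) * (e * inv y)) := by rw [he]
      _ = y * ((a * e) * (e * inv y)) := by rw [← hcomm]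
      _ = (y * a) * ((e * e) * inv y) := by simp only [mul_assoc]
      _ = (y * a) * (e * inv y) := by rw [he]
      _ = (b * y) * (e * inv y) := by rw [hya]
      _ = b * ((y * e) * inv y) := by simp only [mul_assoc]
      _ = b * f := by rw [E11]
  obtain ⟨g, hg⟩ := hfact (y * e)
  have hfg : f = (y * e) * (↑g⁻¹ : M) := by rw [← hg]; exact E12.symm
  have htfg : y * e = f * (↑g : M) := by
    have : f * (↑g : M) = y * e := by
      rw [hfg]
      calc ((y * e) * (↑g⁻¹ : M)) * (↑g : M) = (y * e) * ((↑g⁻¹ : M) * ↑g) := by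
            simp only [mul_assoc]
        _ = (y * e) * 1 := by rw [Units.inv_mul]
        _ = y * e := mul_one _
    exact this.symm
  have hinvt : inv (y * e) = (↑g⁻¹ : M) * f := by
    rw [htfg]
    refine H.inv_uniq ?_ ?_
    · calc (f * (↑g : M)) * ((↑g⁻¹ : M) * f) * (f * (↑g : M))
          = f * (((↑g : M) * (↑g⁻¹ : M)) * ((f * f) * (↑g : M))) := by simp only [mul_assoc]
        _ = f * (1 * ((f * f) * (↑g : M))) := by rw [Units.mul_inv]
        _ = f * ((f * f) * (↑g : M)) := by rw [one_mul]
        _ = f * (f * (↑g : M)) := by rw [hf]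
        _ = (f * f) * (↑g : M) := by simp only [mul_assoc]
        _ = f * (↑g : M) := by rw [hf]
    · calc ((↑g⁻¹ : M) * f) * (f * (↑g : M)) * ((↑g⁻¹ : M) * f)
          = (↑g⁻¹ : M) * ((f * f) * (((↑g : M) * (↑g⁻¹ : M)) * f)) := by
            simp only [mul_assoc]
        _ = (↑g⁻¹ : M) * ((f * f) * (1 * f)) := by rw [Units.mul_inv]
        _ = (↑g⁻¹ : M) * ((f * f) * f) := by rw [one_mul]
        _ = (↑g⁻¹ : M) * f := by rw [hf, hf]
  have hefg : e = ((↑g⁻¹ : M) * f) * (↑g : M) := by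
    calc e = inv (y * e) * (y * e) := E2'.symm
      _ = ((↑g⁻¹ : M) * f) * (f * (↑g : M)) := by rw [hinvt, htfg]
      _ = (↑g⁻¹ : M) * ((f * f) * (↑g : M)) := by simp only [mul_assoc]
      _ = (↑g⁻¹ : M) * (f * (↑g : M)) := by rw [hf]
      _ = ((↑g⁻¹ : M) * f) * (↑g : M) := by simp only [mul_assoc]
  have hbf : b * f = (f * (↑g : M)) * ((a * e) * ((↑g⁻¹ : M) * f)) := by
    calc b * f = (y * e) * (a * e) * inv (y * e) := E14.symm
      _ = (f * (↑g : M)) * (a * e) * ((↑g⁻¹ : M) * f) := by rw [hinvt, htfg]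
      _ = (f * (↑g : M)) * ((a * e) * ((↑g⁻¹ : M) * f)) := by simp only [mul_assoc]
  have hsand : e * ((a * e) * e) = a * e := by
    calc e * ((a * e) * e) = (e * a) * (e * e) := by simp only [mul_assoc]
      _ = (e * a) * e := by rw [he]
      _ = (a * e) * e := by rw [← hcomm]
      _ = a * (e * e) := by simp only [mul_assoc]
      _ = a * e := by rw [he]
  have final : (↑g⁻¹ : M) * (b * f) * (↑g : M) = a * e := by
    calc (↑g⁻¹ : M) * (b * f) * (↑g : M)
        = (↑g⁻¹ : M) * ((f * (↑g : M)) * ((a * e) * ((↑g⁻¹ : M) * f))) * (↑g : M) := by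
          rw [hbf]
      _ = (((↑g⁻¹ : M) * f) * (↑g : M)) * ((a * e) * (((↑g⁻¹ : M) * f) * (↑g : M))) := by
          simp only [mul_assoc]
      _ = e * ((a * e) * e) := by rw [← hefg]
      _ = a * e := hsand
  exact ⟨g, final.symm⟩

theorem FIHyp.step (H : FIHyp M inv)
    (hfact : ∀ s : M, ∃ g : Mˣ, s * inv s = s * (↑g⁻¹ : M))
    (x y : M) {n : ℕ} (hn : 1 ≤ n)
    (hga : (x*y)^n * inv ((x*y)^n) = inv ((x*y)^n) * (x*y)^n)
    (hgb : (y*x)^n * inv ((y*x)^n) = inv ((y*x)^n) * (y*x)^n) :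
    ∃ g : Mˣ, (x*y) * ((x*y)^n * inv ((x*y)^n))
      = (↑g⁻¹ : M) * ((y*x) * ((y*x)^n * inv ((y*x)^n))) * (↑g : M) := by
  have hcomm := (H.stab (x*y) hn hga).2.2
  obtain ⟨k, rfl⟩ : ∃ k, n = k + 1 := ⟨n - 1, by omega⟩
  have hP : (x*y)^(k+1) = (x * (y*x)^k) * y := pow_mid x y k
  have hQ : (y*x)^(k+1) = y * (x * (y*x)^k) := by
    calc (y*x)^(k+1) = (y * (x*y)^k) * x := pow_mid y x k
      _ = y * ((x*y)^k * x) := by simp only [mul_assoc]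
      _ = y * (x * (y*x)^k) := by rw [shift_pow]
  have hya : y * (x*y) = (y*x) * y := by simp only [mul_assoc]
  exact H.core hfact (x*y) (y*x) (x * (y*x)^k) y ((x*y)^(k+1)) ((y*x)^(k+1))
    hP hQ hga hgb hya hcomm

end Aux

theorem pconj_symm {u v : S} (h : PConj u v) : PConj v u := by
  obtain ⟨x, y, h1, h2⟩ := h
  exact ⟨y, x, h2, h1⟩

theorem sconj_symm {u v : S} (h : SConj u v) : SConj v u := by
  induction h with
  | single hp => exact Relation.TransGen.single (pconj_symm hp)
  | tail _ hp ih => exact Relation.TransGen.trans (Relation.TransGen.single (pconj_symm hp)) ih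

theorem factorizable_inverse_epigroup_conjugacy
    {M : Type*} [Monoid M] (inv : M → M)
    (hinv : ∀ x : M, x * inv x * x = x ∧ inv x * x * inv x = inv x)
    (hidem : ∀ e f : M, e * e = e → f * f = f → e * f = f * e)
    (hfact : ∀ s : M, ∃ g : Mˣ, s * inv s = s * (↑g⁻¹ : M))
    (hep : ∀ x : M, GroupBound x)
    (a b ea eb : M) (ta tb : ℕ) (hta : 1 ≤ ta) (htb : 1 ≤ tb)
    (hea : ea * ea = ea) (hHa : HRel (pw a ta) ea)
    (heb : eb * eb = eb) (hHb : HRel (pw b tb) eb) :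
    SConj a b ↔ ∃ g : Mˣ, a * ea = (↑g⁻¹ : M) * (b * eb) * (↑g : M) := by
  have H : FIHyp M inv := ⟨hinv, hidem⟩
  have hpa : pw a ta = a ^ ta := pw_eq_pow a hta
  have hpb : pw b tb = b ^ tb := pw_eq_pow b htb
  obtain ⟨hLa, hRa⟩ := hHa
  obtain ⟨hLb, hRb⟩ := hHb
  rw [hpa] at hLa hRa
  rw [hpb] at hLb hRb
  have haF : a ^ ta * inv (a ^ ta) = ea := by
    have h0 := H.rrel_fl hRa
    rwa [H.inv_idem hea, hea] at h0
  have haL : inv (a ^ ta) * a ^ ta = ea := by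
    have h0 := H.lrel_fl hLa
    rwa [H.inv_idem hea, hea] at h0
  have hbF : b ^ tb * inv (b ^ tb) = eb := by
    have h0 := H.rrel_fl hRb
    rwa [H.inv_idem heb, heb] at h0
  have hbL : inv (b ^ tb) * b ^ tb = eb := by
    have h0 := H.lrel_fl hLb
    rwa [H.inv_idem heb, heb] at h0
  have hgood_a : a ^ ta * inv (a ^ ta) = inv (a ^ ta) * a ^ ta := haF.trans haL.symm
  have hgood_b : b ^ tb * inv (b ^ tb) = inv (b ^ tb) * b ^ tb := hbF.trans hbL.symm
  have hexists : ∀ u : M, ∃ n : ℕ, 1 ≤ n ∧ u ^ n * inv (u ^ n) = inv (u ^ n) * u ^ n := by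
    intro u
    obtain ⟨n, hn1, hge⟩ := hep u
    rw [pw_eq_pow u hn1] at hge
    exact ⟨n, hn1, H.ge_fl hge⟩
  choose N hN1 hNg using hexists
  have key : ∀ u v : M, PConj u v →
      ∃ g : Mˣ, u * (u ^ (N u) * inv (u ^ (N u)))
        = (↑g⁻¹ : M) * (v * (v ^ (N v) * inv (v ^ (N v)))) * (↑g : M) := by
    rintro u v ⟨x, y, rfl, rfl⟩
    have hn : 1 ≤ max (N (x*y)) (N (y*x)) := le_trans (hN1 (x*y)) (le_max_left _ _)
    have g1 := H.good_mono (x*y) (hN1 (x*y)) (hNg (x*y)) (max (N (x*y)) (N (y*x)))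
      (le_max_left _ _)
    have g2 := H.good_mono (y*x) (hN1 (y*x)) (hNg (y*x)) (max (N (x*y)) (N (y*x)))
      (le_max_right _ _)
    obtain ⟨g, hg⟩ := H.step hfact x y hn g1.1 g2.1
    rw [g1.2, g2.2] at hg
    exact ⟨g, hg⟩
  have forward : ∀ v : M, SConj a v →
      ∃ g : Mˣ, a * (a ^ (N a) * inv (a ^ (N a)))
        = (↑g⁻¹ : M) * (v * (v ^ (N v) * inv (v ^ (N v)))) * (↑g : M) := by
    intro v h
    induction h with
    | single hp => exact key _ _ hp
    | tail _ hp ih =>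
      obtain ⟨g₁, hg₁⟩ := ih
      obtain ⟨g₂, hg₂⟩ := key _ _ hp
      refine ⟨g₂ * g₁, ?_⟩
      rw [hg₁, hg₂]
      simp only [mul_inv_rev, Units.val_mul, mul_assoc]
  have hEa : ea = a ^ (N a) * inv (a ^ (N a)) := by
    rw [← haF]
    exact H.wd a hta (hN1 a) hgood_a (hNg a)
  have hEb : eb = b ^ (N b) * inv (b ^ (N b)) := by
    rw [← hbF]
    exact H.wd b htb (hN1 b) hgood_b (hNg b)
  constructor
  · intro h
    obtain ⟨g, hg⟩ := forward b h
    exact ⟨g, by rw [hEa, hEb]; exact hg⟩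
  · rintro ⟨g, hg⟩
    have c1 : SConj a (a * ea) := by
      have h0 := H.chain a ta hta
      rwa [haF] at h0
    have c2 : SConj b (b * eb) := by
      have h0 := H.chain b tb htb
      rwa [hbF] at h0
    have c3 : PConj (a * ea) (b * eb) := by
      refine ⟨(↑g⁻¹ : M) * (b * eb), (↑g : M), ?_, ?_⟩
      · rw [hg]
      · symm
        calc (↑g : M) * ((↑g⁻¹ : M) * (b * eb)) = ((↑g : M) * (↑g⁻¹ : M)) * (b * eb) := by
              simp only [mul_assoc]
          _ = 1 * (b * eb) := by rw [Units.mul_inv]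
          _ = b * eb := one_mul _
    exact Relation.TransGen.trans (c1.tail c3) (sconj_symm c2)
end
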